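/- arXiv:2007.13082 — 6 statements merged into one kernel-verified Lean document; each statement's English description precedes it below -/
import Mathlib

section
/- Let H be a connected simple undirected graph with at least one edge and let G = L(H) be its line graph. Then the clique complex Δ(G) is pure if and only if one of the following holds: (1) H has no triangles and there is an integer r > 3 such that every vertex of H has degree either 1 or r; (2) the maximum degree of H is 3 and every vertex of H of degree 2 is contained in a triangle; (3) H is a path or a cycle. -/
open Finset SimpleGraph

variable {V : Type*} [DecidableEq V]

/-- An abstract simplicial complex: contains the empty face and is downward closed. -/
def IsComplex (K : Set (Finset V)) : Prop :=
  (∅ : Finset V) ∈ K ∧ ∀ F ∈ K, ∀ G ⊆ F, G ∈ K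

/-- `F` is a facet (maximal face) of `K`. -/
def IsFacet (K : Set (Finset V)) (F : Finset V) : Prop :=
  F ∈ K ∧ ∀ G ∈ K, F ⊆ G → F = G

/-- `K` is pure: all facets have the same cardinality. -/
def IsPure (K : Set (Finset V)) : Prop :=
  ∀ F G, IsFacet K F → IsFacet K G → F.card = G.card

/-- Deletion `K - v`. -/
def del (K : Set (Finset V)) (v : V) : Set (Finset V) := {F ∈ K | v ∉ F}

/-- The link of a vertex. -/
def link (K : Set (Finset V)) (v : V) : Set (Finset V) :=
  {F | v ∉ F ∧ insert v F ∈ K}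

/-- A shedding vertex: a vertex such that no face of the link is a facet of the deletion. -/
def IsSheddingVertex (K : Set (Finset V)) (v : V) : Prop :=
  ({v} : Finset V) ∈ K ∧ ∀ F ∈ link K v, ¬ IsFacet (del K v) F

/-- `K` is a (possibly empty-face-only) simplex: the power set of some finset. -/
def IsSimplexComplex (K : Set (Finset V)) : Prop :=
  ∃ F : Finset V, K = {G | G ⊆ F}

/-- Vertex decomposability. -/
inductive VertexDecomposable : Set (Finset V) → Prop
  | simplex (K : Set (Finset V)) : IsSimplexComplex K → VertexDecomposable K
  | shed (K : Set (Finset V)) (v : V) : IsSheddingVertex K v →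
      VertexDecomposable (link K v) → VertexDecomposable (del K v) →
      VertexDecomposable K

/-- The complex generated by a family of finsets. -/
def gen (S : Set (Finset V)) : Set (Finset V) := {G | ∃ F ∈ S, G ⊆ F}

/-- A shelling order of the facets of `K`. -/
def IsShelling (K : Set (Finset V)) (l : List (Finset V)) : Prop :=
  l.Nodup ∧ (∀ F, IsFacet K F ↔ F ∈ l) ∧
  ∀ i : ℕ, (h : i + 1 < l.length) →
    (∃ F, IsFacet (gen {F | F ∈ l.take (i+1)} ∩ gen {l.get ⟨i+1, h⟩}) F) ∧
    ∀ F, IsFacet (gen {F | F ∈ l.take (i+1)} ∩ gen {l.get ⟨i+1, h⟩}) F →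
      F.card + 1 = (l.get ⟨i+1, h⟩).card

def Shellable (K : Set (Finset V)) : Prop := ∃ l, IsShelling K l

/-- Two facets are adjacent (intersect in codimension one). -/
def FacetAdj (K : Set (Finset V)) (F G : Finset V) : Prop :=
  IsFacet K F ∧ IsFacet K G ∧ (F ∩ G).card + 1 = F.card ∧ (F ∩ G).card + 1 = G.card

/-- A pure complex is strongly connected (connected in codimension 1). -/
def StronglyConnected (K : Set (Finset V)) : Prop :=
  IsPure K ∧ ∀ F G, IsFacet K F → IsFacet K G → Relation.ReflTransGen (FacetAdj K) F G

/-- The clique complex of a graph. -/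
def cliqueComplex (G : SimpleGraph V) : Set (Finset V) := {F | G.IsClique (F : Set V)}

/-- The pure `i`-skeleton of `K`: generated by the faces of dimension `i`. -/
def pureSkeleton (K : Set (Finset V)) (i : ℕ) : Set (Finset V) :=
  {G | ∃ F ∈ K, F.card = i + 1 ∧ G ⊆ F}

/-- The link of a face. -/
def linkFace (K : Set (Finset V)) (F : Finset V) : Set (Finset V) :=
  {G | Disjoint F G ∧ F ∪ G ∈ K}

section Homology
variable (k : Type*) [Field k]

/-- Boundary of a single face, w.r.t. a linear order `lo` on the vertices. -/
noncomputable def bdFace (lo : LinearOrder V) (F : Finset V) : Finset V →₀ k :=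
  letI := lo
  ∑ v ∈ F, ((-1 : k) ^ ((F.filter (fun w => w < v)).card)) • Finsupp.single (F.erase v) (1 : k)

/-- The boundary operator of the augmented oriented chain complex, w.r.t. `lo`. -/
noncomputable def bd (lo : LinearOrder V) (c : Finset V →₀ k) : Finset V →₀ k :=
  c.sum fun F a => a • bdFace k lo F

/-- The reduced homology of `K` in the degree of faces of cardinality `j`
(i.e. dimension `j - 1`) vanishes over `k`. -/
def HomologyVanishes (K : Set (Finset V)) (j : ℕ) : Prop :=
  ∀ lo : LinearOrder V, ∀ c : Finset V →₀ k,
    (∀ F ∈ c.support, F ∈ K ∧ F.card = j) → bd k lo c = 0 →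
      ∃ d : Finset V →₀ k, (∀ F ∈ d.support, F ∈ K ∧ F.card = j + 1) ∧ bd k lo d = c

/-- Reisner's criterion: `K` is Cohen–Macaulay over the field `k`. -/
def IsCMover (K : Set (Finset V)) : Prop :=
  ∀ F ∈ K, ∀ j : ℕ, (∃ G ∈ linkFace K F, j < G.card) →
    HomologyVanishes k (linkFace K F) j

/-- `K` is sequentially Cohen–Macaulay over `k`. -/
def IsSeqCMover (K : Set (Finset V)) : Prop :=
  ∀ i : ℕ, IsCMover k (pureSkeleton K i)

/-- The core of a complex. -/
def core (K : Set (Finset V)) : Set (Finset V) :=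
  {F ∈ K | ∀ v ∈ F, ∃ G, IsFacet K G ∧ v ∉ G}

/-- The top reduced homology of `K` is one-dimensional (`≅ k`), where the top
cardinality of a face of `K` is `m`. -/
def TopHomologyIsK (K : Set (Finset V)) (m : ℕ) : Prop :=
  (∃ G ∈ K, G.card = m) ∧ (∀ G ∈ K, G.card ≤ m) ∧
  ∀ lo : LinearOrder V, ∃ c : Finset V →₀ k, c ≠ 0 ∧
    (∀ F ∈ c.support, F ∈ K ∧ F.card = m) ∧ bd k lo c = 0 ∧
    ∀ c' : Finset V →₀ k, (∀ F ∈ c'.support, F ∈ K ∧ F.card = m) → bd k lo c' = 0 →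
      ∃ a : k, c' = a • c

/-- Stanley's criterion: `K` is Gorenstein over `k`. -/
def IsGorensteinOver (K : Set (Finset V)) : Prop :=
  ∀ F ∈ core K, ∃ m : ℕ,
    TopHomologyIsK k (linkFace (core K) F) m ∧
    ∀ j : ℕ, j < m → HomologyVanishes k (linkFace (core K) F) j

end Homology

/-!
A clique of the line graph `L(H)` is a family of pairwise intersecting edges of `H`, so it lies in
the star of a vertex or in a triangle. Hence the facets of `Δ(L(H))` are the triangles (three
edges) and the maximal stars; the star at `v` is maximal when `deg v ≥ 3`, or `deg v = 2` and `v`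
lies on no triangle, while for connected `H` a star with at most one edge is maximal only when `H`
is a single edge or has no edges. Comparing the sizes of these facets gives the three cases. In the
last one `H` has maximum degree at most `2`; numbering its vertices along a longest path shows that
a connected such graph is a path or a cycle.
-/

theorem Sym2.eq_of_forall_pair_meets {α : Type*} {a b c : α} {z : Sym2 α} (hz : ¬ z.IsDiag)
    (hab : a ≠ b) (hac : a ≠ c) (hbc : b ≠ c)
    (h₁ : a ∈ z ∨ b ∈ z) (h₂ : a ∈ z ∨ c ∈ z) (h₃ : b ∈ z ∨ c ∈ z) :
    z = s(a, b) ∨ z = s(a, c) ∨ z = s(b, c) := by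
  induction z with
  | h x y =>
    simp only [Sym2.mk_isDiag_iff, Sym2.mem_iff, Sym2.eq_iff] at *
    grind

namespace SimpleGraph

variable {V : Type*} {G : SimpleGraph V}

theorem Preconnected.mem_of_forall_adj_mem (hG : G.Preconnected) {S : Set V}
    (hS : ∀ u ∈ S, ∀ w, G.Adj u w → w ∈ S) {u : V} (hu : u ∈ S) (x : V) : x ∈ S := by
  obtain ⟨p⟩ := hG u x
  induction p with
  | nil => exact hu
  | cons h _ ih => exact ih (hS _ hu _ h)

theorem eq_or_eq_of_degree_le_two [G.LocallyFinite] {v a b x : V} (hdeg : G.degree v ≤ 2)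
    (ha : G.Adj v a) (hb : G.Adj v b) (hab : a ≠ b) (hx : G.Adj v x) : x = a ∨ x = b := by
  classical
  have hsub : {a, b} ⊆ G.neighborFinset v := by simp [insert_subset_iff, ha, hb]
  have hN := eq_of_subset_of_card_le hsub (by rwa [card_pair hab, card_neighborFinset_eq_degree])
  have hx' := (G.mem_neighborFinset v x).2 hx
  rw [← hN] at hx'
  simpa using hx'

theorem exists_adj_coe_eq (e : G.edgeSet) {x : V} (hx : x ∈ (e : Sym2 V)) :
    ∃ y, G.Adj x y ∧ (e : Sym2 V) = s(x, y) := by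
  obtain ⟨y, hy⟩ := Sym2.mem_iff_exists.1 hx
  exact ⟨y, G.mem_edgeSet.1 (hy ▸ e.2), hy⟩

theorem cycleGraph_adj_iff_val {n : ℕ} (hn : 1 ≤ n) {i j : Fin (n + 1)} :
    (cycleGraph (n + 1)).Adj i j ↔
      i.val + 1 = j.val ∨ j.val + 1 = i.val ∨ i.val = 0 ∧ j.val = n ∨ j.val = 0 ∧ i.val = n := by
  rw [cycleGraph_adj']
  have := i.isLt
  have := j.isLt
  rcases lt_trichotomy i j with h | rfl | h
  · rw [Fin.coe_sub_iff_lt.2 h, Fin.coe_sub_iff_le.2 h.le, Fin.lt_def] at *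
    omega
  · simp only [sub_self, Fin.val_zero]
    omega
  · rw [Fin.coe_sub_iff_lt.2 h, Fin.coe_sub_iff_le.2 h.le, Fin.lt_def] at *
    omega

theorem cycleGraph_degree_le_two (n : ℕ) (x : Fin n) : (cycleGraph n).degree x ≤ 2 := by
  match n, x with
  | 1, x => simp [cycleGraph_one_eq_bot]
  | n + 2, x => simpa [cycleGraph_degree_two_le] using card_insert_le (x - 1) {x + 1}

theorem Iso.degree_le_two_of_le_cycleGraph [G.LocallyFinite] {n : ℕ} {G' : SimpleGraph (Fin n)}
    (f : G ≃g G') (hG' : G' ≤ cycleGraph n) (v : V) : G.degree v ≤ 2 := by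
  classical
  calc G.degree v = G'.degree (f v) := (f.degree_eq v).symm
    _ ≤ (cycleGraph n).degree (f v) := degree_le_of_le hG'
    _ ≤ 2 := cycleGraph_degree_le_two n _

theorem exists_isPath_forall_length_le [Finite V] [Nonempty V] :
    ∃ (u w : V) (p : G.Walk u w), p.IsPath ∧
      ∀ (u' w' : V) (q : G.Walk u' w'), q.IsPath → q.length ≤ p.length := by
  have := Fintype.ofFinite V
  let L : Set ℕ := {l | ∃ (u w : V) (p : G.Walk u w), p.IsPath ∧ p.length = l}
  have hne : L.Nonempty := ⟨0, _, _, .nil (u := Classical.arbitrary V), .nil, rfl⟩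
  have hbdd : BddAbove L :=
    ⟨Fintype.card V, by rintro _ ⟨u, w, p, hp, rfl⟩; exact hp.length_lt.le⟩
  obtain ⟨u, w, p, hp, hl⟩ := Nat.sSup_mem hne hbdd
  exact ⟨u, w, p, hp, fun u' w' q hq => hl ▸ le_csSup hbdd ⟨u', w', q, hq, rfl⟩⟩

namespace Walk

variable {u w : V} {p : G.Walk u w}

theorem IsPath.getVert_inj (hp : p.IsPath) {i j : ℕ} (hi : i ≤ p.length) (hj : j ≤ p.length) :
    p.getVert i = p.getVert j ↔ i = j :=
  ⟨fun h => hp.getVert_injOn hi hj h, fun h => h ▸ rfl⟩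

theorem adj_getVert_pred (p : G.Walk u w) {k : ℕ} (hk0 : 0 < k) (hk : k ≤ p.length) :
    G.Adj (p.getVert k) (p.getVert (k - 1)) := by
  have := p.adj_getVert_succ (i := k - 1) (by omega)
  rwa [Nat.sub_add_cancel hk0, G.adj_comm] at this

theorem IsPath.eq_getVert_of_adj [G.LocallyFinite] (hp : p.IsPath) {k : ℕ} (hk0 : 0 < k)
    (hk : k < p.length) (hdeg : G.degree (p.getVert k) ≤ 2) {t : V}
    (ht : G.Adj (p.getVert k) t) : t = p.getVert (k - 1) ∨ t = p.getVert (k + 1) := by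
  refine eq_or_eq_of_degree_le_two hdeg (p.adj_getVert_pred hk0 hk.le) (p.adj_getVert_succ hk)
    ?_ ht
  rw [Ne, hp.getVert_inj (by omega) (by omega)]
  omega

theorem IsPath.adj_getVert_of_lt [G.LocallyFinite] (hp : p.IsPath) (hdeg : ∀ v, G.degree v ≤ 2)
    {i j : ℕ} (hij : i < j) (hj : j ≤ p.length) (hadj : G.Adj (p.getVert i) (p.getVert j)) :
    j = i + 1 ∨ i = 0 ∧ j = p.length := by
  rcases Nat.eq_zero_or_pos i with rfl | hi
  · rcases hj.lt_or_eq with hj | rfl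
    · rcases hp.eq_getVert_of_adj (by omega) hj (hdeg _) hadj.symm with h | h <;>
        rw [hp.getVert_inj (by omega) (by omega)] at h <;> omega
    · exact Or.inr ⟨rfl, rfl⟩
  · rcases hp.eq_getVert_of_adj hi (by omega) (hdeg _) hadj with h | h <;>
      rw [hp.getVert_inj (by omega) (by omega)] at h <;> omega

theorem IsPath.adj_getVert_iff [G.LocallyFinite] (hp : p.IsPath) (hdeg : ∀ v, G.degree v ≤ 2)
    {i j : ℕ} (hi : i ≤ p.length) (hj : j ≤ p.length) :
    G.Adj (p.getVert i) (p.getVert j) ↔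
      i + 1 = j ∨ j + 1 = i ∨ G.Adj u w ∧ (i = 0 ∧ j = p.length ∨ j = 0 ∧ i = p.length) := by
  constructor
  · intro hadj
    rcases lt_trichotomy i j with h | rfl | h
    · rcases hp.adj_getVert_of_lt hdeg h hj hadj with h' | ⟨rfl, rfl⟩
      · omega
      · simp_all
    · exact absurd rfl hadj.ne
    · rcases hp.adj_getVert_of_lt hdeg h hi hadj.symm with h' | ⟨rfl, rfl⟩
      · omega
      · simp_all [G.adj_comm]
  · rintro (rfl | rfl | ⟨huw, ⟨rfl, rfl⟩ | ⟨rfl, rfl⟩⟩)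
    · exact p.adj_getVert_succ (by omega)
    · exact (p.adj_getVert_succ (by omega)).symm
    · simpa using huw
    · simpa using huw.symm

theorem IsPath.mem_support_of_adj_of_forall_length_le (hp : p.IsPath)
    (hmax : ∀ (u' w' : V) (q : G.Walk u' w'), q.IsPath → q.length ≤ p.length) {t : V}
    (ht : G.Adj w t) : t ∈ p.support := by
  by_contra hts
  have := hmax _ _ _ (hp.concat hts ht)
  rw [length_concat] at this
  omega

end Walk

theorem Connected.mem_support_of_forall_length_le [G.LocallyFinite] (hG : G.Connected)
    (hdeg : ∀ v, G.degree v ≤ 2) {u w : V} {p : G.Walk u w} (hp : p.IsPath)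
    (hmax : ∀ (u' w' : V) (q : G.Walk u' w'), q.IsPath → q.length ≤ p.length) (x : V) :
    x ∈ p.support := by
  refine hG.preconnected.mem_of_forall_adj_mem (S := {z | z ∈ p.support}) ?_
    p.start_mem_support x
  intro z hz t ht
  obtain ⟨k, rfl, hk⟩ := Walk.mem_support_iff_exists_getVert.1 hz
  rcases Nat.eq_zero_or_pos k with rfl | hk0
  · have hrev : t ∈ p.reverse.support := hp.reverse.mem_support_of_adj_of_forall_length_le
      (by simpa using hmax) (by simpa using ht)
    simpa using hrev
  rcases hk.lt_or_eq with hk | rfl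
  · rcases hp.eq_getVert_of_adj hk0 hk (hdeg _) ht with rfl | rfl <;>
      exact p.getVert_mem_support _
  · exact hp.mem_support_of_adj_of_forall_length_le hmax (by simpa using ht)

theorem Connected.exists_iso_pathGraph_or_cycleGraph [Finite V] [G.LocallyFinite]
    (hG : G.Connected) (hdeg : ∀ v, G.degree v ≤ 2) :
    ∃ n, Nonempty (G ≃g pathGraph n) ∨ Nonempty (G ≃g cycleGraph n) := by
  have := hG.nonempty
  obtain ⟨u, w, p, hp, hmax⟩ := exists_isPath_forall_length_le (G := G)
  have hsurj (x : V) : ∃ i : Fin (p.length + 1), p.getVert i = x := by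
    obtain ⟨k, rfl, hk⟩ := Walk.mem_support_iff_exists_getVert.1
      (hG.mem_support_of_forall_length_le hdeg hp hmax x)
    exact ⟨⟨k, by omega⟩, rfl⟩
  let e : Fin (p.length + 1) ≃ V := Equiv.ofBijective (fun i => p.getVert i)
    ⟨fun i j h => Fin.ext (hp.getVert_injOn (by simp; omega) (by simp; omega) h), hsurj⟩
  have he (i j : Fin (p.length + 1)) : G.Adj (e i) (e j) ↔ _ :=
    hp.adj_getVert_iff hdeg (i := i) (j := j) (by omega) (by omega)
  by_cases hcyc : 2 ≤ p.length ∧ G.Adj u w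
  · refine ⟨p.length + 1, Or.inr ⟨(Iso.symm ⟨e, fun {i j} => ?_⟩)⟩⟩
    rw [he, cycleGraph_adj_iff_val (by omega)]
    tauto
  · have hlen : G.Adj u w → p.length = 1 := fun huw => by
      have : p.length ≠ 0 := fun h => huw.ne (Walk.eq_of_length_eq_zero h)
      have : ¬ 2 ≤ p.length := fun h => hcyc ⟨h, huw⟩
      omega
    refine ⟨p.length + 1, Or.inl ⟨(Iso.symm ⟨e, fun {i j} => ?_⟩)⟩⟩
    rw [he, pathGraph_adj]
    constructor
    · rintro (h | h | ⟨huw, h⟩)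
      · omega
      · omega
      · have := hlen huw
        omega
    · omega

end SimpleGraph

section LineGraph

variable {H : SimpleGraph V}

theorem mem_or_mem_of_mem_cliqueComplex {F : Finset H.edgeSet}
    (hF : F ∈ cliqueComplex H.lineGraph) {e f : H.edgeSet} (he : e ∈ F) (hf : f ∈ F) {a b : V}
    (hab : (e : Sym2 V) = s(a, b)) : a ∈ (f : Sym2 V) ∨ b ∈ (f : Sym2 V) := by
  by_cases hef : e = f
  · subst hef
    simp [hab]
  obtain ⟨-, x, hxe, hxf⟩ := lineGraph_adj_iff_exists.1 (hF (mem_coe.2 he) (mem_coe.2 hf) hef)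
  rw [hab, Sym2.mem_iff] at hxe
  rcases hxe with rfl | rfl <;> simp [hxf]

variable [Fintype V] (H) [DecidableRel H.Adj]

def edgeStar (v : V) : Finset H.edgeSet := {e | v ∈ (e : Sym2 V)}

def edgeTriangle (a b c : V) : Finset H.edgeSet :=
  {e | (e : Sym2 V) = s(a, b) ∨ (e : Sym2 V) = s(a, c) ∨ (e : Sym2 V) = s(b, c)}

variable {H}

@[simp] theorem mem_edgeStar {v : V} {e : H.edgeSet} : e ∈ edgeStar H v ↔ v ∈ (e : Sym2 V) := by
  simp [edgeStar]

@[simp] theorem mem_edgeTriangle {a b c : V} {e : H.edgeSet} :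
    e ∈ edgeTriangle H a b c ↔
      (e : Sym2 V) = s(a, b) ∨ (e : Sym2 V) = s(a, c) ∨ (e : Sym2 V) = s(b, c) := by
  simp [edgeTriangle]

theorem card_edgeStar (v : V) : #(edgeStar H v) = H.degree v := by
  rw [← card_incidenceFinset_eq_degree]
  refine card_bij (fun e _ => (e : Sym2 V)) (fun e he => ?_) (fun _ _ _ _ => Subtype.ext)
    (fun e he => ?_)
  · exact (H.mem_incidenceFinset _ _).2 ⟨e.2, mem_edgeStar.1 he⟩
  · obtain ⟨he, hv⟩ := (H.mem_incidenceFinset _ _).1 he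
    exact ⟨⟨e, he⟩, mem_edgeStar.2 hv, rfl⟩

theorem card_edgeTriangle {a b c : V} (hab : H.Adj a b) (hac : H.Adj a c) (hbc : H.Adj b c) :
    #(edgeTriangle H a b c) = 3 := by
  refine card_eq_three.2 ⟨⟨s(a, b), hab⟩, ⟨s(a, c), hac⟩, ⟨s(b, c), hbc⟩, ?_, ?_, ?_, ?_⟩
    <;> simp [Finset.ext_iff, Subtype.ext_iff, hab.ne, hac.ne, hbc.ne, hab.ne', hbc.ne']

theorem edgeStar_mem_cliqueComplex (v : V) : edgeStar H v ∈ cliqueComplex H.lineGraph :=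
  fun _ he _ hf hef =>
    lineGraph_adj_iff_exists.2 ⟨hef, v, mem_edgeStar.1 he, mem_edgeStar.1 hf⟩

theorem edgeTriangle_mem_cliqueComplex (a b c : V) :
    edgeTriangle H a b c ∈ cliqueComplex H.lineGraph := by
  intro e he f hf hef
  refine lineGraph_adj_iff_exists.2 ⟨hef, ?_⟩
  simp only [mem_coe, mem_edgeTriangle] at he hf
  rcases he with he | he | he <;> rcases hf with hf | hf | hf <;> simp [he, hf]

theorem mem_edgeTriangle_of_mem_cliqueComplex {F : Finset H.edgeSet}
    (hF : F ∈ cliqueComplex H.lineGraph) {a b c : V}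
    (hab : H.Adj a b) (hac : H.Adj a c) (hbc : H.Adj b c) {e₁ e₂ e₃ : H.edgeSet}
    (h₁ : (e₁ : Sym2 V) = s(a, b)) (h₂ : (e₂ : Sym2 V) = s(a, c)) (h₃ : (e₃ : Sym2 V) = s(b, c))
    (he₁ : e₁ ∈ F) (he₂ : e₂ ∈ F) (he₃ : e₃ ∈ F) {f : H.edgeSet} (hf : f ∈ F) :
    f ∈ edgeTriangle H a b c :=
  mem_edgeTriangle.2 <| Sym2.eq_of_forall_pair_meets (H.not_isDiag_of_mem_edgeSet f.2)
    hab.ne hac.ne hbc.ne (mem_or_mem_of_mem_cliqueComplex hF he₁ hf h₁)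
    (mem_or_mem_of_mem_cliqueComplex hF he₂ hf h₂) (mem_or_mem_of_mem_cliqueComplex hF he₃ hf h₃)

theorem subset_edgeStar_or_subset_edgeTriangle [Nonempty V] {F : Finset H.edgeSet}
    (hF : F ∈ cliqueComplex H.lineGraph) :
    (∃ v, F ⊆ edgeStar H v) ∨
      ∃ a b c, H.Adj a b ∧ H.Adj a c ∧ H.Adj b c ∧ F ⊆ edgeTriangle H a b c := by
  by_cases hstar : ∃ v, ∀ e ∈ F, v ∈ (e : Sym2 V)
  · obtain ⟨v, hv⟩ := hstar
    exact Or.inl ⟨v, fun e he => mem_edgeStar.2 (hv e he)⟩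
  push Not at hstar
  obtain ⟨e, he, -⟩ := hstar (Classical.arbitrary V)
  obtain ⟨a, b, hab, hea⟩ : ∃ a b, H.Adj a b ∧ (e : Sym2 V) = s(a, b) :=
    ⟨_, H.exists_adj_coe_eq e (Sym2.out_fst_mem _)⟩
  -- no vertex lies on all edges, so edges `f ∌ a` and `g ∌ b` exist; they form a triangle with `e`
  obtain ⟨f, hf, haf⟩ := hstar a
  obtain ⟨g, hg, hbg⟩ := hstar b
  have hbf := (mem_or_mem_of_mem_cliqueComplex hF he hf hea).resolve_left haf
  obtain ⟨c, hbc, hfc⟩ := H.exists_adj_coe_eq f hbf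
  have hag := (mem_or_mem_of_mem_cliqueComplex hF he hg hea).resolve_right hbg
  have hcg := (mem_or_mem_of_mem_cliqueComplex hF hf hg hfc).resolve_left hbg
  have hac : a ≠ c := by
    rintro rfl
    exact haf (hfc ▸ Sym2.mem_mk_right b a)
  have hgc : (g : Sym2 V) = s(a, c) := (Sym2.mem_and_mem_iff hac).1 ⟨hag, hcg⟩
  have hac : H.Adj a c := H.mem_edgeSet.1 (hgc ▸ g.2)
  exact Or.inr ⟨a, b, c, hab, hac, hbc, fun h hh =>
    mem_edgeTriangle_of_mem_cliqueComplex hF hab hac hbc hea hgc hfc he hg hf hh⟩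

theorem eq_edgeStar_or_eq_edgeTriangle_of_isFacet [Nonempty V] {F : Finset H.edgeSet}
    (hF : IsFacet (cliqueComplex H.lineGraph) F) :
    (∃ v, F = edgeStar H v) ∨
      ∃ a b c, H.Adj a b ∧ H.Adj a c ∧ H.Adj b c ∧ F = edgeTriangle H a b c := by
  rcases subset_edgeStar_or_subset_edgeTriangle hF.1 with ⟨v, hv⟩ | ⟨a, b, c, hab, hac, hbc, hsub⟩
  · exact Or.inl ⟨v, hF.2 _ (edgeStar_mem_cliqueComplex v) hv⟩
  · exact Or.inr
      ⟨a, b, c, hab, hac, hbc, hF.2 _ (edgeTriangle_mem_cliqueComplex (H := H) a b c) hsub⟩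

theorem isFacet_edgeTriangle {a b c : V} (hab : H.Adj a b) (hac : H.Adj a c) (hbc : H.Adj b c) :
    IsFacet (cliqueComplex H.lineGraph) (edgeTriangle H a b c) := by
  refine ⟨edgeTriangle_mem_cliqueComplex a b c, fun G hG hsub => hsub.antisymm fun f hf => ?_⟩
  exact mem_edgeTriangle_of_mem_cliqueComplex hG hab hac hbc (e₁ := ⟨_, hab⟩) (e₂ := ⟨_, hac⟩)
    (e₃ := ⟨_, hbc⟩) rfl rfl rfl (hsub (by simp)) (hsub (by simp)) (hsub (by simp)) hf

theorem isFacet_edgeStar {v : V} (h2 : 2 ≤ H.degree v)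
    (htri : H.degree v = 2 → ¬ ∃ a b, H.Adj v a ∧ H.Adj v b ∧ H.Adj a b) :
    IsFacet (cliqueComplex H.lineGraph) (edgeStar H v) := by
  refine ⟨edgeStar_mem_cliqueComplex v, fun G hG hsub => hsub.antisymm fun f hf => ?_⟩
  rw [mem_edgeStar]
  by_contra hvf
  -- `f` meets every edge at `v` without containing `v`, so it contains every neighbour of `v`
  have hnbr : ∀ x, H.Adj v x → x ∈ (f : Sym2 V) := fun x hx =>
    (mem_or_mem_of_mem_cliqueComplex hG (e := ⟨_, hx⟩) (hsub (by simp)) hf rfl).resolve_left hvf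
  rw [← card_neighborFinset_eq_degree] at h2 htri
  rcases h2.lt_or_eq with h3 | h2
  · obtain ⟨x, y, z, hx, hy, hz, hxy, hxz, hyz⟩ := two_lt_card_iff.1 h3
    simp only [mem_neighborFinset] at hx hy hz
    have hz' := hnbr z hz
    rw [(Sym2.mem_and_mem_iff hxy).1 ⟨hnbr x hx, hnbr y hy⟩, Sym2.mem_iff] at hz'
    tauto
  · obtain ⟨x, hx, y, hy, hxy⟩ := one_lt_card.1 h2.le
    simp only [mem_neighborFinset] at hx hy
    have hf' := (Sym2.mem_and_mem_iff hxy).1 ⟨hnbr x hx, hnbr y hy⟩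
    exact htri h2.symm ⟨x, y, hx, hy, H.mem_edgeSet.1 (hf' ▸ f.2)⟩

theorem edgeStar_subset_edgeTriangle {v a b : V} (hdeg : H.degree v ≤ 2) (ha : H.Adj v a)
    (hb : H.Adj v b) (hab : H.Adj a b) : edgeStar H v ⊆ edgeTriangle H v a b := by
  intro e he
  obtain ⟨x, hx, hex⟩ := H.exists_adj_coe_eq e (mem_edgeStar.1 he)
  rcases eq_or_eq_of_degree_le_two hdeg ha hb hab.ne hx with rfl | rfl <;> simp [hex]

theorem not_isFacet_edgeStar {v a b : V} (hdeg : H.degree v ≤ 2) (ha : H.Adj v a)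
    (hb : H.Adj v b) (hab : H.Adj a b) : ¬ IsFacet (cliqueComplex H.lineGraph) (edgeStar H v) := by
  intro hF
  have := congrArg card <| hF.2 _ (edgeTriangle_mem_cliqueComplex v a b)
    (edgeStar_subset_edgeTriangle hdeg ha hb hab)
  rw [card_edgeStar, card_edgeTriangle ha hb hab] at this
  omega

theorem degree_eq_of_isFacet_edgeStar (hH : H.Preconnected) {v : V}
    (hF : IsFacet (cliqueComplex H.lineGraph) (edgeStar H v)) (hv : H.degree v ≤ 1) (w : V) :
    H.degree w = H.degree v := by
  rcases Nat.le_one_iff_eq_zero_or_eq_one.1 hv with h0 | h1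
  · -- any edge would be a clique strictly containing the empty facet
    have hS : edgeStar H v = ∅ := by rw [← card_eq_zero, card_edgeStar, h0]
    rw [h0, ← Nat.le_zero, ← not_lt, degree_pos_iff_exists_adj]
    rintro ⟨x, hwx⟩
    have := hF.2 ({⟨s(w, x), hwx⟩} : Finset H.edgeSet) (by simp [cliqueComplex])
      (hS ▸ empty_subset _)
    exact singleton_ne_empty _ (hS ▸ this).symm
  · obtain ⟨u, hvu, hu⟩ := degree_eq_one_iff_existsUnique_adj.1 h1
    -- the only edge at `v` is `uv`, so maximality of its star forces `deg u = 1`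
    have hsub : edgeStar H v ⊆ edgeStar H u := fun e he => by
      obtain ⟨x, hx, hex⟩ := H.exists_adj_coe_eq e (mem_edgeStar.1 he)
      simp [hex, hu x hx]
    have hu1 : H.degree u = 1 := by
      rw [← card_edgeStar, ← hF.2 _ (edgeStar_mem_cliqueComplex u) hsub, card_edgeStar, h1]
    obtain ⟨v', -, hv'⟩ := degree_eq_one_iff_existsUnique_adj.1 hu1
    have hw : w ∈ ({v, u} : Set V) := by
      refine hH.mem_of_forall_adj_mem ?_ (Set.mem_insert v {u}) w
      rintro z (rfl | rfl) t ht
      · simp [hu t ht]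
      · simp [hv' t ht, hv' _ hvu.symm]
    rcases hw with rfl | rfl <;> simp [h1, hu1]

theorem isPure_of_triangleFree (hH : H.Connected)
    (htf : ¬ ∃ a b c : V, H.Adj a b ∧ H.Adj a c ∧ H.Adj b c) {r : ℕ}
    (hdeg : ∀ v, H.degree v ≤ 1 ∨ H.degree v = r) : IsPure (cliqueComplex H.lineGraph) := by
  have := hH.nonempty
  have hstar {F : Finset H.edgeSet} (hF : IsFacet (cliqueComplex H.lineGraph) F) :
      ∃ v, F = edgeStar H v :=
    (eq_edgeStar_or_eq_edgeTriangle_of_isFacet hF).resolve_right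
      fun ⟨a, b, c, hab, hac, hbc, _⟩ => htf ⟨a, b, c, hab, hac, hbc⟩
  intro F G hF hG
  obtain ⟨v, rfl⟩ := hstar hF
  obtain ⟨w, rfl⟩ := hstar hG
  rw [card_edgeStar, card_edgeStar]
  rcases hdeg v with hv | hv
  · exact (degree_eq_of_isFacet_edgeStar hH.preconnected hF hv w).symm
  rcases hdeg w with hw | hw
  · exact degree_eq_of_isFacet_edgeStar hH.preconnected hG hw v
  · rw [hv, hw]

theorem isPure_of_isFacet_edgeStar_degree_eq_three [Nonempty V]
    (h : ∀ v, IsFacet (cliqueComplex H.lineGraph) (edgeStar H v) → H.degree v = 3) :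
    IsPure (cliqueComplex H.lineGraph) := by
  have hcard {F : Finset H.edgeSet} (hF : IsFacet (cliqueComplex H.lineGraph) F) : #F = 3 := by
    rcases eq_edgeStar_or_eq_edgeTriangle_of_isFacet hF with
      ⟨v, rfl⟩ | ⟨a, b, c, hab, hac, hbc, rfl⟩
    · rw [card_edgeStar, h v hF]
    · exact card_edgeTriangle hab hac hbc
  exact fun F G hF hG => (hcard hF).trans (hcard hG).symm

theorem isPure_of_degree_le_three (hH : H.Connected) (hmax : ∀ v, H.degree v ≤ 3)
    (h3 : ∃ v, H.degree v = 3)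
    (htri : ∀ v, H.degree v = 2 → ∃ a b, H.Adj v a ∧ H.Adj v b ∧ H.Adj a b) :
    IsPure (cliqueComplex H.lineGraph) := by
  have := hH.nonempty
  refine isPure_of_isFacet_edgeStar_degree_eq_three fun v hv => ?_
  obtain ⟨u, hu⟩ := h3
  rcases (show H.degree v ≤ 1 ∨ H.degree v = 2 ∨ H.degree v = 3 by have := hmax v; omega)
    with h | h | h
  · have := degree_eq_of_isFacet_edgeStar hH.preconnected hv h u
    omega
  · obtain ⟨a, b, ha, hb, hab⟩ := htri v h
    exact absurd hv (not_isFacet_edgeStar h.le ha hb hab)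
  · exact h

theorem isPure_of_degree_le_two (hH : H.Connected) (hdeg : ∀ v, H.degree v ≤ 2) :
    IsPure (cliqueComplex H.lineGraph) := by
  by_cases htri : ∃ a b c : V, H.Adj a b ∧ H.Adj a c ∧ H.Adj b c
  · obtain ⟨a, b, c, hab, hac, hbc⟩ := htri
    have := hH.nonempty
    -- `H` is the triangle `abc`, so no star is maximal
    have hV : ∀ x, x ∈ ({a, b, c} : Set V) := by
      refine hH.preconnected.mem_of_forall_adj_mem ?_ (Set.mem_insert a _)
      rintro z (rfl | rfl | rfl) t ht
      · rcases eq_or_eq_of_degree_le_two (hdeg _) hab hac hbc.ne ht with rfl | rfl <;> simp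
      · rcases eq_or_eq_of_degree_le_two (hdeg _) hab.symm hbc hac.ne ht with rfl | rfl <;> simp
      · rcases eq_or_eq_of_degree_le_two (hdeg _) hac.symm hbc.symm hab.ne ht with rfl | rfl <;>
          simp
    refine isPure_of_isFacet_edgeStar_degree_eq_three fun v hv => absurd hv ?_
    rcases hV v with rfl | rfl | rfl
    · exact not_isFacet_edgeStar (hdeg _) hab hac hbc
    · exact not_isFacet_edgeStar (hdeg _) hab.symm hbc hac
    · exact not_isFacet_edgeStar (hdeg _) hac.symm hbc.symm hab
  · exact isPure_of_triangleFree hH htri (r := 2) fun v => by have := hdeg v; omega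

theorem degree_eq_three_of_isPure_of_isFacet_edgeStar (hpure : IsPure (cliqueComplex H.lineGraph))
    {a b c : V} (hab : H.Adj a b) (hac : H.Adj a c) (hbc : H.Adj b c) {v : V}
    (hv : IsFacet (cliqueComplex H.lineGraph) (edgeStar H v)) : H.degree v = 3 := by
  simpa [card_edgeStar, card_edgeTriangle hab hac hbc] using
    hpure _ _ hv (isFacet_edgeTriangle hab hac hbc)

theorem degree_le_three_of_isPure (hpure : IsPure (cliqueComplex H.lineGraph))
    {a b c : V} (hab : H.Adj a b) (hac : H.Adj a c) (hbc : H.Adj b c) (v : V) :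
    H.degree v ≤ 3 := by
  by_contra! hv
  have := degree_eq_three_of_isPure_of_isFacet_edgeStar hpure hab hac hbc
    (isFacet_edgeStar (v := v) (by omega) (by omega))
  omega

theorem exists_adj_adj_of_isPure_of_degree_eq_two (hpure : IsPure (cliqueComplex H.lineGraph))
    {a b c : V} (hab : H.Adj a b) (hac : H.Adj a c) (hbc : H.Adj b c) {v : V}
    (hv : H.degree v = 2) : ∃ x y, H.Adj v x ∧ H.Adj v y ∧ H.Adj x y := by
  by_contra htri
  have := degree_eq_three_of_isPure_of_isFacet_edgeStar hpure hab hac hbc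
    (isFacet_edgeStar hv.ge fun _ => htri)
  omega

theorem degree_eq_one_or_eq_of_isPure (hH : H.Connected)
    (hpure : IsPure (cliqueComplex H.lineGraph))
    (htf : ¬ ∃ a b c : V, H.Adj a b ∧ H.Adj a c ∧ H.Adj b c) {v : V} (hv : 3 ≤ H.degree v)
    (w : V) : H.degree w = 1 ∨ H.degree w = H.degree v := by
  have : Nontrivial V := nontrivial_of_degree_ne_zero (by omega : H.degree v ≠ 0)
  have hw := hH.preconnected.degree_pos_of_nontrivial w
  rcases (show H.degree w = 1 ∨ 2 ≤ H.degree w by omega) with h | h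
  · exact Or.inl h
  · have hfw := isFacet_edgeStar h fun _ ⟨a, b, ha, hb, hab⟩ => htf ⟨w, a, b, ha, hb, hab⟩
    have hfv := isFacet_edgeStar (H := H) (v := v) (by omega) (by omega)
    right
    simpa [card_edgeStar] using hpure _ _ hfw hfv

end LineGraph

theorem stmt0_general {V : Type} [DecidableEq V] [Fintype V] (H : SimpleGraph V) [DecidableRel H.Adj]
    (hconn : H.Connected) :
    IsPure (cliqueComplex (SimpleGraph.lineGraph H)) ↔
      (((¬ ∃ a b c : V, H.Adj a b ∧ H.Adj a c ∧ H.Adj b c) ∧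
        ∃ r : ℕ, 3 < r ∧ ∀ v : V, H.degree v = 1 ∨ H.degree v = r) ∨
      ((∀ v : V, H.degree v ≤ 3) ∧ (∃ v : V, H.degree v = 3) ∧
        ∀ v : V, H.degree v = 2 → ∃ a b : V, H.Adj v a ∧ H.Adj v b ∧ H.Adj a b) ∨
      (∃ n : ℕ, Nonempty (H ≃g pathGraph n) ∨ Nonempty (H ≃g cycleGraph n))) := by
  constructor
  · intro hpure
    by_cases hmax : ∀ v, H.degree v ≤ 2
    · exact Or.inr (Or.inr (hconn.exists_iso_pathGraph_or_cycleGraph hmax))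
    obtain ⟨v, hv⟩ : ∃ v, 3 ≤ H.degree v := by simpa [Nat.lt_iff_add_one_le] using hmax
    by_cases htri : ∃ a b c : V, H.Adj a b ∧ H.Adj a c ∧ H.Adj b c
    · obtain ⟨a, b, c, hab, hac, hbc⟩ := htri
      have hmax := degree_le_three_of_isPure hpure hab hac hbc
      exact Or.inr (Or.inl ⟨hmax, ⟨v, le_antisymm (hmax v) hv⟩,
        fun w => exists_adj_adj_of_isPure_of_degree_eq_two hpure hab hac hbc⟩)
    · have hdeg := degree_eq_one_or_eq_of_isPure hconn hpure htri hv
      rcases hv.lt_or_eq with hv | hv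
      · exact Or.inl ⟨htri, _, hv, hdeg⟩
      · refine Or.inr (Or.inl ⟨fun w => ?_, ⟨v, hv.symm⟩, fun w hw => ?_⟩) <;>
          rcases hdeg w with h | h <;> omega
  · rintro (⟨htf, r, -, hdeg⟩ | ⟨hmax, h3, htri⟩ | ⟨n, hiso⟩)
    · exact isPure_of_triangleFree hconn htf fun v => (hdeg v).imp le_of_eq id
    · exact isPure_of_degree_le_three hconn hmax h3 htri
    · refine isPure_of_degree_le_two hconn ?_
      rcases hiso with ⟨⟨f⟩⟩ | ⟨⟨f⟩⟩
      · exact f.degree_le_two_of_le_cycleGraph pathGraph_le_cycleGraph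
      · exact f.degree_le_two_of_le_cycleGraph le_rfl

/-- purity of the clique complex of a line graph. -/
theorem stmt0 {V : Type} [DecidableEq V] [Fintype V] (H : SimpleGraph V) [DecidableRel H.Adj]
    (hconn : H.Connected) (hedge : H.edgeSet.Nonempty) :
    IsPure (cliqueComplex (SimpleGraph.lineGraph H)) ↔
      (((¬ ∃ a b c : V, H.Adj a b ∧ H.Adj a c ∧ H.Adj b c) ∧
        ∃ r : ℕ, 3 < r ∧ ∀ v : V, H.degree v = 1 ∨ H.degree v = r) ∨
      ((∀ v : V, H.degree v ≤ 3) ∧ (∃ v : V, H.degree v = 3) ∧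
        ∀ v : V, H.degree v = 2 → ∃ a b : V, H.Adj v a ∧ H.Adj v b ∧ H.Adj a b) ∨
      (∃ n : ℕ, Nonempty (H ≃g pathGraph n) ∨ Nonempty (H ≃g cycleGraph n))) :=
  stmt0_general H hconn
end

section
/- Let C be a simple graph in which no two vertices of degree 1 are adjacent unless C is a single edge, and let Δ = ⟨E(C)⟩. A vertex v of Δ (i.e., a non-isolated vertex of C) is a shedding vertex of Δ if and only if v has no neighbor of degree 1 in C. -/
open Finset SimpleGraph

variable {V : Type*} [DecidableEq V]

/-- The complex generated by the edges of a graph. -/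
def edgeComplex {V : Type} [DecidableEq V] (C : SimpleGraph V) : Set (Finset V) :=
  {F | ∃ a b : V, C.Adj a b ∧ F ⊆ ({a, b} : Finset V)}

/-!
The link of a non-isolated vertex `v` of `⟨E(C)⟩` consists of `∅` and the singletons `{w}`
with `w` a neighbour of `v`. The empty face is never a facet of `Δ − v`, since it lies below
`{w}`; and `{w}` is a facet of `Δ − v` exactly when every edge at `w` ends in `v`, i.e. when
`w` is a leaf of `C`.
-/

theorem SimpleGraph.degree_eq_one_iff_forall_adj_eq {V : Type*} {G : SimpleGraph V} {v w : V}
    [Fintype (G.neighborSet w)] (hwv : G.Adj w v) :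
    G.degree w = 1 ↔ ∀ x, G.Adj w x → x = v := by
  rw [degree_eq_one_iff_existsUnique_adj]
  exact ⟨fun ⟨u, _, hu⟩ x hx => (hu x hx).trans (hu v hwv).symm, fun h => ⟨v, hwv, h⟩⟩

section EdgeComplex

variable {V : Type} [DecidableEq V] {C : SimpleGraph V} {v w : V}

theorem pair_mem_edgeComplex (h : C.Adj v w) : {v, w} ∈ edgeComplex C :=
  ⟨v, w, h, subset_rfl⟩

theorem isClique_of_mem_edgeComplex {F : Finset V} (hF : F ∈ edgeComplex C) :
    C.IsClique (F : Set V) := by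
  obtain ⟨a, b, hab, hsub⟩ := hF
  exact (isClique_pair.2 fun _ => hab).subset (by rw [← coe_pair]; exact coe_subset.2 hsub)

theorem singleton_mem_del_edgeComplex (h : C.Adj v w) : {w} ∈ del (edgeComplex C) v :=
  ⟨⟨w, v, h.symm, by simp⟩, by simpa using h.ne⟩

theorem mem_link_edgeComplex_iff {F : Finset V} :
    F ∈ link (edgeComplex C) v ↔ v ∉ F ∧ ∃ w, C.Adj v w ∧ F ⊆ {w} := by
  refine ⟨fun ⟨hvF, a, b, hab, hsub⟩ => ⟨hvF, ?_⟩, fun ⟨hvF, w, hvw, hF⟩ => ⟨hvF, ?_⟩⟩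
  · have hF : ∀ x ∈ F, x = a ∨ x = b := fun x hx => by simpa using hsub (mem_insert_of_mem hx)
    rcases (by simpa using hsub (mem_insert_self v F) : v = a ∨ v = b) with rfl | rfl
    · exact ⟨b, hab, fun x hx => by grind⟩
    · exact ⟨a, hab.symm, fun x hx => by grind⟩
  · exact ⟨v, w, hvw, insert_subset_insert v hF⟩

theorem isFacet_del_edgeComplex_singleton_iff (hvw : C.Adj v w) :
    IsFacet (del (edgeComplex C) v) {w} ↔ ∀ x, C.Adj w x → x = v := by
  refine ⟨fun hfac x hwx => ?_, fun h => ⟨singleton_mem_del_edgeComplex hvw, ?_⟩⟩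
  · by_contra hxv
    have hpair : {w, x} ∈ del (edgeComplex C) v :=
      ⟨pair_mem_edgeComplex hwx, by simp [hvw.ne, Ne.symm hxv]⟩
    have hx : x ∈ ({w} : Finset V) := hfac.2 _ hpair (by simp) ▸ by simp
    exact hwx.ne (mem_singleton.1 hx).symm
  · rintro G ⟨⟨a, b, hab, hG⟩, hvG⟩ hwG
    refine subset_antisymm hwG fun x hx => mem_singleton.2 <| by_contra fun hxw => ?_
    have hwx : C.Adj w x :=
      isClique_of_mem_edgeComplex ⟨a, b, hab, hG⟩ (hwG (mem_singleton_self w)) hx (Ne.symm hxw)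
    exact hvG (h x hwx ▸ hx)

theorem isSheddingVertex_edgeComplex_iff (hv : ∃ w, C.Adj v w) :
    IsSheddingVertex (edgeComplex C) v ↔
      ∀ w, C.Adj v w → ¬ IsFacet (del (edgeComplex C) v) {w} := by
  obtain ⟨w₀, hw₀⟩ := hv
  constructor
  · rintro ⟨-, hshed⟩ w hvw
    exact hshed {w} (mem_link_edgeComplex_iff.2 ⟨by simpa using hvw.ne, w, hvw, subset_rfl⟩)
  · refine fun h => ⟨⟨v, w₀, hw₀, by simp⟩, fun F hF hfac => ?_⟩
    obtain ⟨-, w, hvw, hFw⟩ := mem_link_edgeComplex_iff.1 hF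
    rcases subset_singleton_iff.1 hFw with rfl | rfl
    · exact singleton_ne_empty w₀
        (hfac.2 _ (singleton_mem_del_edgeComplex hw₀) (empty_subset _)).symm
    · exact h w hvw hfac

end EdgeComplex

theorem stmt3_general {V : Type} [DecidableEq V] [Fintype V] (C : SimpleGraph V) [DecidableRel C.Adj]
    (v : V) (hv : ∃ w : V, C.Adj v w) :
    IsSheddingVertex (edgeComplex C) v ↔ ∀ w : V, C.Adj v w → C.degree w ≠ 1 := by
  rw [isSheddingVertex_edgeComplex_iff hv]
  refine forall₂_congr fun w hvw => ?_
  rw [isFacet_del_edgeComplex_singleton_iff hvw, ne_eq, degree_eq_one_iff_forall_adj_eq hvw.symm]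

theorem stmt3 {V : Type} [DecidableEq V] [Fintype V] (C : SimpleGraph V) [DecidableRel C.Adj]
    (h : (∀ a b : V, C.Adj a b → ¬(C.degree a = 1 ∧ C.degree b = 1)) ∨
         (∃ a b : V, C.Adj a b ∧ C.edgeSet = {s(a, b)}))
    (v : V) (hv : ∃ w : V, C.Adj v w) :
    IsSheddingVertex (edgeComplex C) v ↔ ∀ w : V, C.Adj v w → C.degree w ≠ 1 :=
  stmt3_general C v hv
end

section
/- Let Γ be a connected simplicial complex, a a vertex of Γ, and b a vertex not in Γ. Then Γ is vertex decomposable if and only if Γ + ⟨{a,b}⟩ (the complex obtained by adding the facet {a,b}) is vertex decomposable. -/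
open Finset SimpleGraph

variable {V : Type*} [DecidableEq V]

/-- The vertex set of a complex. -/
def vertices {V : Type} [DecidableEq V] (K : Set (Finset V)) : Set V :=
  {v | ({v} : Finset V) ∈ K}

/-- A complex is connected. -/
def ComplexConnected {V : Type} [DecidableEq V] (K : Set (Finset V)) : Prop :=
  (vertices K).Nonempty ∧ ∀ v ∈ vertices K, ∀ w ∈ vertices K,
    Relation.ReflTransGen (fun x y => ∃ F ∈ K, x ∈ F ∧ y ∈ F) v w

/-- Adding a new facet `F` to a complex. -/
def addFace {V : Type} [DecidableEq V] (K : Set (Finset V)) (F : Finset V) :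
    Set (Finset V) :=
  K ∪ {G | G ⊆ F}

/-!
Deleting `b` from `Γ + ⟨{a, b}⟩` gives back `Γ`, and the link of `b` is the simplex `⟨{a}⟩`,
so `b` is a shedding vertex unless `{a}` is a facet of `Γ`; for connected `Γ` that forces
`Γ = ⟨{a}⟩`.

Conversely, induct on a vertex decomposition of `Γ + ⟨{a, b}⟩` with shedding vertex `v`. For
`v = b` the deletion is `Γ`. For `v = a` the link and deletion are those of `Γ` plus the isolated
vertex `b`, which a similar induction removes. Otherwise the induction hypothesis applies to the
deletion, and `v` is a shedding vertex of `Γ` unless `{a}` is a facet of `Γ - v`, i.e. `a` is a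
leaf of `Γ` hanging at `v`. Then `a` is a shedding vertex of `Γ`, except when `v` lies in no
other face of `Γ`; in that case swapping `v` and `b` turns `(Γ + ⟨{a, b}⟩) - v` into `Γ`.
-/

section

variable {V W : Type*} {K : Set (Finset V)} {F : Finset V} {v : V}

theorem isComplex_del (hK : IsComplex K) (v : V) : IsComplex (del K v) :=
  ⟨⟨hK.1, notMem_empty v⟩, fun F hF G hG => ⟨hK.2 F hF.1 G hG, fun h => hF.2 (hG h)⟩⟩

theorem isComplex_link [DecidableEq V] (hK : IsComplex K) (hv : {v} ∈ K) :
    IsComplex (link K v) :=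
  ⟨⟨notMem_empty v, by simpa using hv⟩,
    fun F hF G hG => ⟨fun h => hF.1 (hG h), hK.2 _ hF.2 _ (insert_subset_insert v hG)⟩⟩

theorem del_eq_self (hv : ∀ G ∈ K, v ∉ G) : del K v = K :=
  Set.sep_eq_self_iff_mem_true.2 hv

theorem link_eq_empty [DecidableEq V] (hv : ∀ G ∈ K, v ∉ G) : link K v = ∅ :=
  Set.eq_empty_of_forall_notMem fun G hG => hv _ hG.2 (mem_insert_self v G)

theorem notMem_of_mem_link [DecidableEq V] {b : V} (hb : ∀ G ∈ K, b ∉ G)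
    (hF : F ∈ link K v) : b ∉ F :=
  fun h => hb _ hF.2 (mem_insert_of_mem h)

theorem not_isFacet_empty (hv : {v} ∈ K) : ¬ IsFacet K ∅ :=
  fun h => singleton_ne_empty v (h.2 _ hv (empty_subset _)).symm

theorem IsSimplexComplex.del [DecidableEq V] (hK : IsSimplexComplex K) (v : V) :
    IsSimplexComplex (del K v) := by
  obtain ⟨F, rfl⟩ := hK
  exact ⟨F.erase v, Set.ext fun G => subset_erase.symm⟩

theorem VertexDecomposable.of_link_del [DecidableEq V] (hK : IsComplex K) (hv : {v} ∈ K)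
    (hl : VertexDecomposable (link K v)) (hd : VertexDecomposable (del K v))
    (h : ∀ F ∈ link K v, IsFacet (del K v) F → F = ∅) : VertexDecomposable K := by
  by_cases h0 : IsFacet (del K v) ∅
  · refine .simplex K ⟨{v}, Set.ext fun G => ⟨fun hG => ?_, fun hG => ?_⟩⟩
    · have hGv := h0.2 (G.erase v) ⟨hK.2 G hG _ (erase_subset v G), notMem_erase v G⟩
        (empty_subset _)
      rcases (erase_eq_empty_iff G v).1 hGv.symm with rfl | rfl <;> simp
    · rcases subset_singleton_iff.1 hG with rfl | rfl
      exacts [hK.1, hv]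
  · exact .shed K v ⟨hv, fun F hF hFf => h0 (h F hF hFf ▸ hFf)⟩ hl hd

def relabel (e : W ≃ V) (K : Set (Finset V)) : Set (Finset W) :=
  {F | F.map e.toEmbedding ∈ K}

theorem link_relabel [DecidableEq V] [DecidableEq W] (e : W ≃ V) (K : Set (Finset V)) (w : W) :
    link (relabel e K) w = relabel e (link K (e w)) := by
  ext F
  simp [relabel, link, map_insert]

theorem del_relabel (e : W ≃ V) (K : Set (Finset V)) (w : W) :
    del (relabel e K) w = relabel e (del K (e w)) := by
  ext F
  simp [relabel, del]

theorem isFacet_relabel (e : W ≃ V) {F : Finset W} :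
    IsFacet (relabel e K) F ↔ IsFacet K (F.map e.toEmbedding) := by
  refine ⟨fun h => ⟨h.1, fun G hG hFG => ?_⟩, fun h => ⟨h.1, fun G hG hFG => ?_⟩⟩
  · have hG' : G.map e.symm.toEmbedding ∈ relabel e K := by
      simpa [relabel, Finset.map_map] using hG
    rw [h.2 _ hG' (subset_map_symm.2 hFG)]
    simp [Finset.map_map]
  · exact map_injective _ (h.2 _ hG (map_subset_map.2 hFG))

theorem IsSimplexComplex.relabel (e : W ≃ V) (hK : IsSimplexComplex K) :
    IsSimplexComplex (relabel e K) := by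
  obtain ⟨F, rfl⟩ := hK
  exact ⟨F.map e.symm.toEmbedding, Set.ext fun G => subset_map_symm.symm⟩

theorem VertexDecomposable.relabel [DecidableEq V] [DecidableEq W] (e : W ≃ V)
    (h : VertexDecomposable K) : VertexDecomposable (relabel e K) := by
  induction h with
  | simplex K hK => exact .simplex _ (hK.relabel e)
  | shed K v hv _ _ ihl ihd =>
    have hv' : e (e.symm v) = v := e.apply_symm_apply v
    refine .shed _ (e.symm v) ⟨by simpa [_root_.relabel] using hv.1, fun F hF hFf => ?_⟩
      (by rwa [link_relabel, hv']) (by rwa [del_relabel, hv'])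
    rw [link_relabel, hv'] at hF
    rw [del_relabel, hv', isFacet_relabel] at hFf
    exact hv.2 _ hF hFf

theorem relabel_eq_self (e : Equiv.Perm V) (he : ∀ G ∈ K, ∀ x ∈ G, e x = x) :
    relabel e K = K := by
  have hmap : ∀ G : Finset V, (∀ x ∈ G, e x = x) → G.map e.toEmbedding = G := fun G hG =>
    map_eq_of_subset fun y hy => by
      obtain ⟨x, hx, rfl⟩ := mem_map.1 hy
      simpa [hG x hx] using hx
  ext G
  refine ⟨fun hG => ?_, fun hG => by rwa [relabel, Set.mem_ofPred_eq, hmap G (he G hG)]⟩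
  have hfix : ∀ x ∈ G, e x = x := fun x hx =>
    e.injective (he _ hG (e x) (mem_map_of_mem _ hx))
  rwa [relabel, Set.mem_ofPred_eq, hmap G hfix] at hG

end

section

variable {V : Type} [DecidableEq V] {K L M : Set (Finset V)} {F A B : Finset V} {a b v x : V}

theorem relabel_addFace {W : Type} [DecidableEq W] (e : W ≃ V) (K : Set (Finset V))
    (F : Finset V) :
    relabel e (addFace K F) = addFace (relabel e K) (F.map e.symm.toEmbedding) := by
  ext G
  simp only [relabel, addFace, Set.mem_union, Set.mem_ofPred_eq, subset_map_symm]

theorem addFace_eq_self (hK : IsComplex K) (hF : F ∈ K) : addFace K F = K :=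
  Set.union_eq_left.2 fun G hG => hK.2 F hF G hG

theorem addFace_addFace_of_subset (h : A ⊆ B) : addFace (addFace K A) B = addFace K B := by
  ext G
  simp only [addFace, Set.mem_union, Set.mem_ofPred_eq]
  exact ⟨fun hG => hG.elim (·.imp_right (·.trans h)) Or.inr, fun hG => hG.imp_left Or.inl⟩

theorem IsFacet.addFace (hF : IsFacet K F) (hFA : ¬ F ⊆ A) : IsFacet (addFace K A) F :=
  ⟨Or.inl hF.1, fun G hG hFG => hG.elim (hF.2 G · hFG) fun hGA => absurd (hFG.trans hGA) hFA⟩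

theorem del_addFace : del (addFace K F) v = addFace (del K v) (F.erase v) := by
  ext G
  simp only [del, addFace, Set.mem_union, Set.mem_ofPred_eq, subset_erase]
  tauto

theorem link_addFace_of_mem (hv : v ∈ F) :
    link (addFace K F) v = addFace (link K v) (F.erase v) := by
  ext G
  simp only [link, addFace, Set.mem_union, Set.mem_ofPred_eq, subset_erase, insert_subset_iff]
  tauto

theorem link_addFace_of_notMem (hv : v ∉ F) : link (addFace K F) v = link K v := by
  ext G
  simp only [link, addFace, Set.mem_union, Set.mem_ofPred_eq, insert_subset_iff]
  tauto

theorem del_addFace_of_fresh (hK : IsComplex K) (hb : ∀ G ∈ K, b ∉ G) (hF : F.erase b ∈ K) :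
    del (addFace K F) b = K := by
  rw [del_addFace, del_eq_self hb, addFace_eq_self hK hF]

theorem link_addFace_of_fresh (hb : ∀ G ∈ K, b ∉ G) (hbF : b ∈ F) :
    link (addFace K F) b = {G | G ⊆ F.erase b} := by
  rw [link_addFace_of_mem hbF, link_eq_empty hb, addFace, Set.empty_union]

theorem eq_addFace_del (hK : IsComplex K) (hF : F ∈ K) (h : ∀ G ∈ K, x ∈ G → G ⊆ F) :
    K = addFace (del K x) F :=
  Set.ext fun G => ⟨fun hG => if hx : x ∈ G then Or.inr (h G hG hx) else Or.inl ⟨hG, hx⟩,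
    fun hG => hG.elim (·.1) (hK.2 F hF G)⟩

theorem IsSheddingVertex.eq_empty_of_isFacet_del (hshed : IsSheddingVertex M v)
    (hdel : del M v = addFace (del K v) A) (hlink : link K v ⊆ link M v) (hF : F ∈ link K v)
    (hFA : Disjoint F A) (hFf : IsFacet (del K v) F) : F = ∅ := by
  by_contra hne
  exact hshed.2 F (hlink hF) (hdel ▸ hFf.addFace fun h => hne (hFA.eq_bot_of_le h))

theorem eq_addFace_of_isFacet_del (hK : IsComplex K) (hav : a ≠ v) (hF : {a} ∈ link K v)
    (hFf : IsFacet (del K v) {a}) : K = addFace (del K a) {v, a} :=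
  eq_addFace_del hK hF.2 fun G hG haG =>
    (insert_erase_subset v G).trans <| insert_subset_insert v <| ge_of_eq <| hFf.2 _
      ⟨hK.2 G hG _ (erase_subset v G), notMem_erase v G⟩
      (singleton_subset_iff.2 (mem_erase.2 ⟨hav, haG⟩))

theorem VertexDecomposable.of_addFace_singleton (hK : IsComplex K) (hb : ∀ G ∈ K, b ∉ G)
    (h : VertexDecomposable (addFace K {b})) : VertexDecomposable K := by
  have hdel_b : ∀ {K : Set (Finset V)}, IsComplex K → (∀ G ∈ K, b ∉ G) →
      del (addFace K {b}) b = K := fun hK hb =>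
    del_addFace_of_fresh hK hb (by simpa using hK.1)
  generalize hM : addFace K {b} = M at h
  induction h generalizing K with
  | simplex M hs =>
    subst hM
    exact .simplex _ (hdel_b hK hb ▸ hs.del b)
  | shed M v hshed hlink hdel _ ihd =>
    subst hM
    by_cases hvb : v = b
    · subst hvb
      rwa [hdel_b hK hb] at hdel
    have hvb' : v ∉ ({b} : Finset V) := by simpa using hvb
    have hlinkM : link (addFace K {b}) v = link K v := link_addFace_of_notMem hvb'
    have hdelM : del (addFace K {b}) v = addFace (del K v) {b} := by
      rw [del_addFace, erase_eq_of_notMem hvb']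
    exact .of_link_del hK (hshed.1.resolve_right (by simpa using hvb)) (hlinkM ▸ hlink)
      (ihd (isComplex_del hK v) (fun G hG => hb G hG.1) hdelM.symm) fun F hF =>
        hshed.eq_empty_of_isFacet_del hdelM hlinkM.ge hF
          (disjoint_singleton_right.2 (notMem_of_mem_link hb hF))

theorem VertexDecomposable.addFace_pair_of_isFacet_singleton (hL : IsComplex L)
    (hiso : IsFacet L {v}) (hb : ∀ G ∈ L, b ∉ G) (hva : v ≠ a) (hab : a ≠ b)
    (h : VertexDecomposable (addFace (del L v) {a, b})) :
    VertexDecomposable (addFace L {v, a}) := by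
  have hLv : L = addFace (del L v) {v} :=
    eq_addFace_del hL hiso.1 fun G hG hvG => (hiso.2 G hG (singleton_subset_iff.2 hvG)).ge
  have hfix : ∀ G ∈ del L v, ∀ x ∈ G, Equiv.swap v b x = x := fun G hG x hx =>
    Equiv.swap_apply_of_ne_of_ne (fun h => hG.2 (h ▸ hx)) (fun h => hb G hG.1 (h ▸ hx))
  have hswap :
      addFace L {v, a} = _root_.relabel (Equiv.swap v b) (addFace (del L v) {a, b}) := by
    nth_rewrite 1 [hLv]
    rw [addFace_addFace_of_subset (by simp), relabel_addFace, relabel_eq_self _ hfix]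
    simp [Equiv.swap_apply_of_ne_of_ne (Ne.symm hva) hab, pair_comm]
  rw [hswap]
  exact h.relabel _

theorem VertexDecomposable.addFace_leaf (hL : IsComplex L) (hv : {v} ∈ L)
    (ha : ∀ G ∈ L, a ∉ G) (hb : ∀ G ∈ L, b ∉ G) (hab : a ≠ b)
    (hshed : IsSheddingVertex (addFace (addFace L {v, a}) {a, b}) v)
    (hlink : VertexDecomposable (link (addFace (addFace L {v, a}) {a, b}) v))
    (hdel : VertexDecomposable (del (addFace (addFace L {v, a}) {a, b}) v))
    (hdelK : VertexDecomposable (del (addFace L {v, a}) v)) :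
    VertexDecomposable (addFace L {v, a}) := by
  have hva : v ≠ a := fun h => ha _ hv (h ▸ mem_singleton_self v)
  have hvb : v ≠ b := fun h => hb _ hv (h ▸ mem_singleton_self v)
  have hva' : v ∉ ({a} : Finset V) := by simpa using hva
  have hvab : v ∉ ({a, b} : Finset V) := by simp [hva, hvb]
  have hlinkM : link (addFace (addFace L {v, a}) {a, b}) v = addFace (link L v) {a} := by
    rw [link_addFace_of_notMem hvab, link_addFace_of_mem (mem_insert_self v _),
      erase_insert hva']
  have hdelK' : del (addFace L {v, a}) v = addFace (del L v) {a} := by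
    rw [del_addFace, erase_insert hva']
  have hdelM : del (addFace (addFace L {v, a}) {a, b}) v = addFace (del L v) {a, b} := by
    rw [del_addFace, hdelK', erase_eq_of_notMem hvab, addFace_addFace_of_subset (by simp)]
  by_cases hiso : IsFacet L {v}
  · exact (hdelM ▸ hdel).addFace_pair_of_isFacet_singleton hL hiso hb hva hab
  have hlinkL : VertexDecomposable (link L v) :=
    (hlinkM ▸ hlink).of_addFace_singleton (isComplex_link hL hv) fun G hG =>
      notMem_of_mem_link ha hG
  have hdelL : VertexDecomposable (del L v) :=
    (hdelK' ▸ hdelK).of_addFace_singleton (isComplex_del hL v) fun G hG => ha G hG.1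
  have hLvd : VertexDecomposable L := .of_link_del hL hv hlinkL hdelL fun F hF =>
    hshed.eq_empty_of_isFacet_del hdelM (hlinkM ▸ Set.subset_union_left) hF
      (by simp [notMem_of_mem_link ha hF, notMem_of_mem_link hb hF])
  have haerase : ({v, a} : Finset V).erase a = {v} := by simp [erase_insert_of_ne hva]
  have hdelLa : del (addFace L {v, a}) a = L := del_addFace_of_fresh hL ha (haerase ▸ hv)
  have hlinkLa : link (addFace L {v, a}) a = {G | G ⊆ {v}} := by
    rw [link_addFace_of_fresh ha (by simp), haerase]
  refine .shed _ a ⟨Or.inr (by simp), fun F hF hFf => ?_⟩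
    (hlinkLa ▸ .simplex _ ⟨{v}, rfl⟩) (by rwa [hdelLa])
  rw [hlinkLa] at hF
  rw [hdelLa] at hFf
  rcases subset_singleton_iff.1 hF with rfl | rfl
  exacts [not_isFacet_empty hv hFf, hiso hFf]

theorem VertexDecomposable.of_isSheddingVertex_addFace_pair (hK : IsComplex K) (ha : {a} ∈ K)
    (hb : ∀ G ∈ K, b ∉ G) (hab : a ≠ b) (hvab : v ∉ ({a, b} : Finset V))
    (hshed : IsSheddingVertex (addFace K {a, b}) v)
    (hlink : VertexDecomposable (link (addFace K {a, b}) v))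
    (hdel : VertexDecomposable (del (addFace K {a, b}) v))
    (hdelK : VertexDecomposable (del K v)) : VertexDecomposable K := by
  have hva : a ≠ v := fun h => hvab (h ▸ mem_insert_self a _)
  have hlinkM : link (addFace K {a, b}) v = link K v := link_addFace_of_notMem hvab
  have hdelM : del (addFace K {a, b}) v = addFace (del K v) {a, b} := by
    rw [del_addFace, erase_eq_of_notMem hvab]
  have hv : {v} ∈ K := hshed.1.resolve_right fun h => hvab (h (mem_singleton_self v))
  have hav : {a} ∈ del K v := ⟨ha, by simpa [eq_comm] using hva⟩
  by_cases hsh : IsSheddingVertex K v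
  · exact .shed K v hsh (hlinkM ▸ hlink) hdelK
  obtain ⟨F, hF, hFf⟩ : ∃ F ∈ link K v, IsFacet (del K v) F := by
    simpa [IsSheddingVertex, hv] using hsh
  obtain rfl : F = {a} := by
    have hFab : F ⊆ {b, a} := by
      by_contra hFab
      exact hshed.2 F (hlinkM ▸ hF) (hdelM ▸ hFf.addFace (pair_comm a b ▸ hFab))
    rcases subset_singleton_iff.1 ((subset_insert_iff_of_notMem
      (notMem_of_mem_link hb hF)).1 hFab) with rfl | rfl
    exacts [(not_isFacet_empty hav hFf).elim, rfl]
  have hKL := eq_addFace_of_isFacet_del hK hva hF hFf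
  rw [hKL] at hshed hlink hdel hdelK ⊢
  exact .addFace_leaf (isComplex_del hK a) ⟨hv, by simpa using hva⟩ (fun G hG => hG.2)
    (fun G hG => hb G hG.1) hab hshed hlink hdel hdelK

theorem VertexDecomposable.of_addFace_pair (hK : IsComplex K) (ha : {a} ∈ K)
    (hb : ∀ G ∈ K, b ∉ G) (h : VertexDecomposable (addFace K {a, b})) :
    VertexDecomposable K := by
  have hab : a ≠ b := fun h => hb _ ha (h ▸ mem_singleton_self a)
  have hdel_b : ∀ {K : Set (Finset V)}, IsComplex K → {a} ∈ K → (∀ G ∈ K, b ∉ G) →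
      del (addFace K {a, b}) b = K := fun hK ha hb =>
    del_addFace_of_fresh hK hb (by simpa [erase_insert_of_ne hab] using ha)
  generalize hM : addFace K {a, b} = M at h
  induction h generalizing K with
  | simplex M hs =>
    subst hM
    exact .simplex _ (hdel_b hK ha hb ▸ hs.del b)
  | shed M v hshed hlink hdel _ ihd =>
    subst hM
    by_cases hvb : v = b
    · subst hvb
      rwa [hdel_b hK ha hb] at hdel
    by_cases hva : v = a
    · subst v
      have herase : ({a, b} : Finset V).erase a = {b} := erase_insert (by simpa using hab)
      have hlinkM : link (addFace K {a, b}) a = addFace (link K a) {b} := by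
        rw [link_addFace_of_mem (mem_insert_self a _), herase]
      have hdelM : del (addFace K {a, b}) a = addFace (del K a) {b} := by
        rw [del_addFace, herase]
      exact .of_link_del hK ha
        ((hlinkM ▸ hlink).of_addFace_singleton (isComplex_link hK ha) fun G hG =>
          notMem_of_mem_link hb hG)
        ((hdelM ▸ hdel).of_addFace_singleton (isComplex_del hK a) fun G hG => hb G hG.1)
        fun F hF => hshed.eq_empty_of_isFacet_del hdelM (hlinkM ▸ Set.subset_union_left) hF
          (disjoint_singleton_right.2 (notMem_of_mem_link hb hF))
    have hvab : v ∉ ({a, b} : Finset V) := by simp [hva, hvb]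
    refine .of_isSheddingVertex_addFace_pair hK ha hb hab hvab hshed hlink hdel ?_
    exact ihd (isComplex_del hK v) ⟨ha, by simpa [eq_comm] using hva⟩ (fun G hG => hb G hG.1)
      (by rw [del_addFace, erase_eq_of_notMem hvab])

theorem ComplexConnected.eq_of_isFacet_singleton (hconn : ComplexConnected K) (hK : IsComplex K)
    (ha : IsFacet K {a}) : K = {G | G ⊆ {a}} := by
  have hvert : ∀ w ∈ vertices K, w = a := fun w hw => by
    have hpath := hconn.2 a ha.1 w hw
    clear hw
    induction hpath with
    | refl => rfl
    | tail _ hxy ih =>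
      obtain ⟨F, hF, hx, hy⟩ := hxy
      subst ih
      simpa [← ha.2 F hF (singleton_subset_iff.2 hx)] using hy
  exact Set.ext fun G => ⟨fun hG x hx => mem_singleton.2 <|
    hvert x (hK.2 G hG _ (singleton_subset_iff.2 hx)), fun hG => hK.2 _ ha.1 G hG⟩

theorem VertexDecomposable.addFace_pair (hK : IsComplex K) (hconn : ComplexConnected K)
    (ha : {a} ∈ K) (hb : ∀ G ∈ K, b ∉ G) (h : VertexDecomposable K) :
    VertexDecomposable (addFace K {a, b}) := by
  have hab : a ≠ b := fun h => hb _ ha (h ▸ mem_singleton_self a)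
  by_cases hfa : IsFacet K {a}
  · rw [hconn.eq_of_isFacet_singleton hK hfa]
    exact .simplex _ ⟨{a, b}, Set.union_eq_right.2 fun G (hG : G ⊆ {a}) => hG.trans (by simp)⟩
  have hberase : ({a, b} : Finset V).erase b = {a} := by simp [erase_insert_of_ne hab]
  have hlinkM : link (addFace K {a, b}) b = {G | G ⊆ {a}} := by
    rw [link_addFace_of_fresh hb (by simp), hberase]
  have hdelM : del (addFace K {a, b}) b = K := del_addFace_of_fresh hK hb (hberase ▸ ha)
  refine .shed _ b ⟨Or.inr (by simp), fun F hF hFf => ?_⟩ (hlinkM ▸ .simplex _ ⟨{a}, rfl⟩)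
    (by rwa [hdelM])
  rw [hlinkM] at hF
  rw [hdelM] at hFf
  rcases subset_singleton_iff.1 hF with rfl | rfl
  exacts [not_isFacet_empty ha hFf, hfa hFf]

end

theorem stmt5 {V : Type} [DecidableEq V] (K : Set (Finset V)) (hK : IsComplex K)
    (hconn : ComplexConnected K) (a b : V) (ha : ({a} : Finset V) ∈ K)
    (hb : ∀ F ∈ K, b ∉ F) :
    VertexDecomposable K ↔ VertexDecomposable (addFace K {a, b}) :=
  ⟨fun h => h.addFace_pair hK hconn ha hb, fun h => h.of_addFace_pair hK ha hb⟩
end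

section
/- Let Γ be a simplicial complex and let a, b be two distinct free vertices of Γ contained in distinct facets E and F respectively, with |E| ≥ 2 and |F| ≥ 2. If Γ is shellable, then Γ + ⟨{a,b}⟩ is shellable; moreover, if |E| ≥ 3 and |F| ≥ 3 and Γ + ⟨{a,b}⟩ is shellable, then Γ is shellable. -/
open Finset SimpleGraph

variable {V : Type*} [DecidableEq V]

/-- A free vertex: a vertex contained in exactly one facet. -/
def IsFreeVertex {V : Type} [DecidableEq V] (K : Set (Finset V)) (a : V) : Prop :=
  ({a} : Finset V) ∈ K ∧ ∃! F, IsFacet K F ∧ a ∈ F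


/-!
The facets of `Γ + ⟨{a,b}⟩` are those of `Γ` together with `{a,b}`. Since `a` and `b` lie in no
facet other than `E` and `F` respectively, the faces of `{a,b}` already in `Γ` are `∅`, `{a}`, `{b}`,
the boundary of the edge, so `{a,b}` may be appended at the end of any shelling of `Γ`.
Conversely, delete `{a,b}` from a shelling of `Γ + ⟨{a,b}⟩`. For a later facet `G`, the edge only
adds the faces of `{a,b} ∩ G` to the intersection of `G` with the earlier facets; this is empty or,
when `G` is `E` or `F`, a single vertex. As `|G| ≥ 3`, the facets of that intersection have at
least two vertices, so they are not affected, and the shelling condition survives.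
-/

section Shelling

variable {α : Type*}

lemma isFacet_iff_maximal {I : Set (Finset α)} {M : Finset α} :
    IsFacet I M ↔ Maximal (· ∈ I) M :=
  ⟨fun h => ⟨h.1, fun _ hy hle => (h.2 _ hy hle).ge⟩,
    fun h => ⟨h.1, fun _ hy hle => le_antisymm hle (h.2 hy hle)⟩⟩

lemma exists_isFacet_superset {I : Set (Finset α)} (hI : I.Finite) {x : Finset α} (hx : x ∈ I) :
    ∃ M, IsFacet I M ∧ x ⊆ M := by
  obtain ⟨M, hxM, hM⟩ := hI.exists_le_maximal hx
  exact ⟨M, isFacet_iff_maximal.2 hM, hxM⟩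

lemma gen_union_singleton_inter_gen_singleton [DecidableEq α] (P : Set (Finset α))
    (A G : Finset α) :
    gen (P ∪ {A}) ∩ gen {G} = (gen P ∩ gen {G}) ∪ {x | x ⊆ A ∩ G} := by
  ext x
  simp only [gen, Set.mem_inter_iff, Set.mem_union, Set.mem_singleton_iff, Set.mem_ofPred_eq,
    subset_inter_iff]
  constructor
  · rintro ⟨⟨Q, hQ | rfl, hxQ⟩, H, rfl, hxH⟩
    · exact Or.inl ⟨⟨Q, hQ, hxQ⟩, H, rfl, hxH⟩
    · exact Or.inr ⟨hxQ, hxH⟩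
  · rintro (⟨⟨Q, hQ, hxQ⟩, hG⟩ | ⟨hxA, hxG⟩)
    · exact ⟨⟨Q, Or.inl hQ, hxQ⟩, hG⟩
    · exact ⟨⟨A, Or.inr rfl, hxA⟩, G, rfl, hxG⟩

/-- `⟨P⟩ ∩ ⟨G⟩` is pure of dimension `dim G - 1`: the shelling condition on a facet `G` preceded
by the facets `P`. -/
def IsShellingStep (P : Set (Finset α)) (G : Finset α) : Prop :=
  (∃ M, IsFacet (gen P ∩ gen {G}) M) ∧ ∀ M, IsFacet (gen P ∩ gen {G}) M → M.card + 1 = G.card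

lemma isShellingStep_of_gen_inter_eq_ssubsets [DecidableEq α] {P : Set (Finset α)}
    {G : Finset α} (hP : gen P ∩ gen {G} = {x | x ⊂ G}) (hG : G.Nonempty) : IsShellingStep P G := by
  rw [IsShellingStep, hP]
  obtain ⟨v, hv⟩ := hG
  refine ⟨⟨G.erase v, erase_ssubset hv, fun y hy hle => ?_⟩, fun M hM => ?_⟩
  · have := card_lt_card (Set.mem_ofPred_eq ▸ hy)
    have := card_erase_add_one hv
    exact eq_of_subset_of_card_le hle (by omega)
  · obtain ⟨w, hw, hMw⟩ := ssubset_iff_exists_subset_erase.1 hM.1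
    rw [hM.2 _ (erase_ssubset hw) hMw]
    exact card_erase_add_one hw

lemma IsShellingStep.of_union_singleton [DecidableEq α] {P : Set (Finset α)} {A G : Finset α}
    (h : IsShellingStep (P ∪ {A}) G) (hP : P.Nonempty)
    (hA : (A ∩ G).Nonempty → (A ∩ G).card + 1 < G.card) : IsShellingStep P G := by
  unfold IsShellingStep at h ⊢
  rw [gen_union_singleton_inter_gen_singleton] at h
  set I := gen P ∩ gen {G}
  rcases (A ∩ G).eq_empty_or_nonempty with hAG | hAG
  · have hI : I ∪ {x | x ⊆ A ∩ G} = I := by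
      refine Set.union_eq_self_of_subset_right fun x hx => ?_
      obtain ⟨Q, hQ⟩ := hP
      rw [hAG, Set.mem_ofPred_eq, subset_empty] at hx
      exact hx ▸ ⟨⟨Q, hQ, empty_subset Q⟩, G, rfl, empty_subset G⟩
    rwa [hI] at h
  obtain ⟨⟨M₀, hM₀⟩, hcard⟩ := h
  have hfin : (I ∪ {x | x ⊆ A ∩ G}).Finite := by
    refine G.powerset.finite_toSet.subset ?_
    rintro x (⟨-, H, rfl, hxH⟩ | hx)
    · simpa using hxH
    · simpa using hx.trans inter_subset_right
  -- the facets of the union are too large to be faces of `A ∩ G`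
  have hmem : ∀ M, IsFacet (I ∪ {x | x ⊆ A ∩ G}) M → M ∈ I := fun M hM =>
    hM.1.resolve_right fun hsub => by
      have := card_le_card hsub
      have := hcard M hM
      have := hA hAG
      omega
  refine ⟨⟨M₀, hmem M₀ hM₀, fun y hy => hM₀.2 y (Or.inl hy)⟩, fun M hM => ?_⟩
  obtain ⟨M', hM', hMM'⟩ := exists_isFacet_superset hfin (Or.inl hM.1)
  rw [hM.2 M' (hmem M' hM') hMM']
  exact hcard M' hM'

lemma isShelling_iff {K : Set (Finset α)} {l : List (Finset α)} :
    IsShelling K l ↔ l.Nodup ∧ (∀ F, IsFacet K F ↔ F ∈ l) ∧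
      ∀ u G, u ++ [G] <+: l → u ≠ [] → IsShellingStep {x | x ∈ u} G := by
  refine and_congr_right fun _ => and_congr_right fun _ =>
    ⟨fun h u G hpre hu => ?_, fun h i hi => ?_⟩
  · have hu₀ := List.length_pos_of_ne_nil hu
    have hlen : u.length - 1 + 1 < l.length := by
      have := hpre.length_le
      simp only [List.length_append, List.length_singleton] at this
      omega
    have hu₁ : u.length - 1 + 1 = u.length := Nat.sub_add_cancel hu₀
    have htake : l.take (u.length - 1 + 1) = u := by
      rw [hu₁]
      exact (List.prefix_iff_eq_take.1 ((List.prefix_append u [G]).trans hpre)).symm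
    have hget : l.get ⟨_, hlen⟩ = G := by
      simp only [List.get_eq_getElem, hu₁]
      rw [← hpre.getElem (by simp)]
      simp
    have := h _ hlen
    rwa [htake, hget] at this
  · refine h _ _ ?_ ?_
    · rw [List.get_eq_getElem, List.take_concat_get']
      exact List.take_prefix _ _
    · simpa using List.ne_nil_of_length_pos (by omega : 0 < l.length)

lemma IsShelling.append_singleton {K K' : Set (Finset α)} {l : List (Finset α)} {A : Finset α}
    (hl : IsShelling K l) (hK' : ∀ X, IsFacet K' X ↔ IsFacet K X ∨ X = A)
    (hA : ¬ IsFacet K A) (hstep : l ≠ [] → IsShellingStep {x | x ∈ l} A) :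
    IsShelling K' (l ++ [A]) := by
  obtain ⟨hnd, hfac, hsteps⟩ := isShelling_iff.1 hl
  refine isShelling_iff.2 ⟨?_, fun X => ?_, fun u G hpre hu => ?_⟩
  · exact hnd.append (List.nodup_singleton A) (by simpa [hfac] using hA)
  · rw [hK', hfac]
    simp
  · rcases List.prefix_concat_iff.1 hpre with heq | hpre
    · obtain ⟨rfl, hG⟩ := List.append_inj' heq rfl
      obtain rfl : G = A := by simpa using hG
      exact hstep hu
    · exact hsteps u G hpre hu

lemma IsShelling.append_of_append_cons [DecidableEq α] {K K' : Set (Finset α)}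
    {u₀ w₀ : List (Finset α)} {A : Finset α} (hl : IsShelling K' (u₀ ++ A :: w₀))
    (hK' : ∀ X, IsFacet K' X ↔ IsFacet K X ∨ X = A) (hA : ¬ IsFacet K A)
    (hAG : ∀ G, IsFacet K G → (A ∩ G).Nonempty → (A ∩ G).card + 1 < G.card) :
    IsShelling K (u₀ ++ w₀) := by
  obtain ⟨hnd, hfac, hsteps⟩ := isShelling_iff.1 hl
  have hAu₀w₀ : A ∉ u₀ ++ w₀ := by
    have := List.nodup_middle.1 hnd
    exact (List.nodup_cons.1 this).1
  have hfac' : ∀ X, IsFacet K X ↔ X ∈ u₀ ++ w₀ := fun X => by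
    constructor
    · intro hX
      have hXA : X ≠ A := by rintro rfl; exact hA hX
      have := (hfac X).1 ((hK' X).2 (Or.inl hX))
      simp only [List.mem_append, List.mem_cons] at this ⊢
      tauto
    · intro hX
      have hXA : X ≠ A := by rintro rfl; exact hAu₀w₀ hX
      refine ((hK' X).1 ((hfac X).2 ?_)).resolve_right hXA
      simp only [List.mem_append, List.mem_cons] at hX ⊢
      tauto
  refine isShelling_iff.2 ⟨hnd.sublist (by simp), hfac', fun u G hpre hu => ?_⟩
  rcases le_or_gt (u ++ [G]).length u₀.length with hle | hlt
  · exact hsteps u G (List.prefix_append_of_prefix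
      (List.prefix_of_prefix_length_le hpre (List.prefix_append _ _) hle)) hu
  obtain ⟨v, rfl⟩ : u₀ <+: u := List.prefix_of_prefix_length_le (List.prefix_append _ _)
    ((List.prefix_append u [G]).trans hpre) (by simp at hlt; omega)
  have hv : v ++ [G] <+: w₀ := by simpa using hpre
  have hG : IsFacet K G := (hfac' G).2 (List.mem_append_right _ (hv.subset (by simp)))
  have hstep := hsteps (u₀ ++ A :: v) G (by simpa using hv) (by simp)
  refine IsShellingStep.of_union_singleton ?_ (List.exists_mem_of_ne_nil _ hu) (hAG G hG)
  convert hstep using 2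
  ext x
  simp only [Set.mem_union, Set.mem_ofPred_eq, Set.mem_singleton_iff, List.mem_append,
    List.mem_cons]
  tauto

lemma isShellingStep_pair [DecidableEq α] {P : Set (Finset α)} {a b : α} {E F : Finset α}
    (hP : ∀ Q ∈ P, ¬ {a, b} ⊆ Q) (hE : E ∈ P) (hF : F ∈ P) (haE : a ∈ E) (hbF : b ∈ F) :
    IsShellingStep P {a, b} := by
  refine isShellingStep_of_gen_inter_eq_ssubsets ?_ (insert_nonempty _ _)
  ext x
  simp only [gen, Set.mem_inter_iff, Set.mem_singleton_iff, Set.mem_ofPred_eq, exists_eq_left]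
  constructor
  · rintro ⟨⟨Q, hQ, hxQ⟩, hx⟩
    exact ssubset_of_subset_of_ne hx fun h => hP Q hQ (h ▸ hxQ)
  · intro hx
    refine ⟨?_, hx.subset⟩
    obtain ⟨v, hv, hxv⟩ := ssubset_iff_exists_subset_erase.1 hx
    rcases mem_insert.1 hv with rfl | hv
    · refine ⟨F, hF, hxv.trans fun w hw => ?_⟩
      obtain ⟨hwv, hw⟩ := mem_erase.1 hw
      rcases mem_insert.1 hw with rfl | hw
      · exact absurd rfl hwv
      · exact mem_singleton.1 hw ▸ hbF
    · refine ⟨E, hE, hxv.trans fun w hw => ?_⟩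
      obtain ⟨hwv, hw⟩ := mem_erase.1 hw
      rcases mem_insert.1 hw with rfl | hw
      · exact haE
      · exact absurd ((mem_singleton.1 hw).trans (mem_singleton.1 hv).symm) hwv

end Shelling

section FreeVertices

variable {V : Type} [DecidableEq V] {K : Set (Finset V)}

lemma addFace_eq_self_s9 (hK : IsComplex K) {A : Finset V} (hA : A ∈ K) : addFace K A = K :=
  Set.union_eq_self_of_subset_right fun x hx => hK.2 A hA x hx

lemma isFacet_addFace_iff (hK : IsComplex K) {A : Finset V} (hA : A ∉ K)
    (hAK : ∀ X, IsFacet K X → ¬ X ⊆ A) {X : Finset V} :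
    IsFacet (addFace K A) X ↔ IsFacet K X ∨ X = A := by
  constructor
  · rintro ⟨hX | hX, hmax⟩
    · exact Or.inl ⟨hX, fun y hy => hmax y (Or.inl hy)⟩
    · exact Or.inr (hmax A (Or.inr (Subset.refl _)) hX)
  · rintro (hX | rfl)
    · refine ⟨Or.inl hX.1, fun y hy hXy => ?_⟩
      rcases hy with hy | hy
      · exact hX.2 y hy hXy
      · exact absurd (hXy.trans hy) (hAK X hX)
    · refine ⟨Or.inr (Subset.refl _), fun y hy hXy => ?_⟩
      rcases hy with hy | hy
      · exact absurd (hK.2 y hy _ hXy) hA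
      · exact subset_antisymm hXy hy

lemma IsFreeVertex.eq_of_isFacet {a : V} (ha : IsFreeVertex K a) {E G : Finset V}
    (hE : IsFacet K E) (haE : a ∈ E) (hG : IsFacet K G) (haG : a ∈ G) : G = E :=
  ha.2.unique ⟨hG, haG⟩ ⟨hE, haE⟩

variable {a b : V} {E F : Finset V} (ha : IsFreeVertex K a) (hb : IsFreeVertex K b)
  (hE : IsFacet K E) (hF : IsFacet K F) (haE : a ∈ E) (hbF : b ∈ F) (hbE : b ∉ E) (haF : a ∉ F)
include ha hb hE hF haE hbF hbE haF

lemma not_isFacet_subset_pair (hE2 : 2 ≤ E.card) (hF2 : 2 ≤ F.card) :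
    ∀ X, IsFacet K X → ¬ X ⊆ {a, b} := by
  intro X hX hXab
  have hXEF : X = E ∨ X = F := by
    by_cases haX : a ∈ X
    · exact Or.inl (ha.eq_of_isFacet hE haE hX haX)
    by_cases hbX : b ∈ X
    · exact Or.inr (hb.eq_of_isFacet hF hbF hX hbX)
    -- otherwise `X = ∅`, which is maximal only if it is `E`
    refine Or.inl (hX.2 E hE.1 fun v hv => ?_)
    rcases mem_insert.1 (hXab hv) with rfl | hvb
    · exact absurd hv haX
    · exact absurd (mem_singleton.1 hvb ▸ hv) hbX
  rcases hXEF with rfl | rfl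
  · have := card_le_card ((subset_insert_iff_of_notMem hbE).1 (pair_comm a b ▸ hXab))
    simp only [card_singleton] at this
    omega
  · have := card_le_card ((subset_insert_iff_of_notMem haF).1 hXab)
    simp only [card_singleton] at this
    omega

lemma card_pair_inter_add_one_lt (hE3 : 3 ≤ E.card) (hF3 : 3 ≤ F.card) :
    ∀ G, IsFacet K G → ({a, b} ∩ G).Nonempty → ({a, b} ∩ G).card + 1 < G.card := by
  rintro G hG ⟨v, hv⟩
  obtain ⟨hvab, hvG⟩ := mem_inter.1 hv
  rcases mem_insert.1 hvab with rfl | hvb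
  · obtain rfl := ha.eq_of_isFacet hE haE hG hvG
    have : {v, b} ∩ G ⊆ {v} := fun w hw => by
      rcases mem_insert.1 (mem_inter.1 hw).1 with rfl | hwb
      · exact mem_singleton_self w
      · exact absurd (mem_singleton.1 hwb ▸ (mem_inter.1 hw).2) hbE
    have := card_le_card this
    simp only [card_singleton] at this
    omega
  · obtain rfl := mem_singleton.1 hvb
    obtain rfl := hb.eq_of_isFacet hF hbF hG hvG
    have : {a, v} ∩ G ⊆ {v} := fun w hw => by
      rcases mem_insert.1 (mem_inter.1 hw).1 with rfl | hwb
      · exact absurd (mem_inter.1 hw).2 haF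
      · exact hwb
    have := card_le_card this
    simp only [card_singleton] at this
    omega

end FreeVertices

theorem stmt9_general {V : Type} [DecidableEq V] (K : Set (Finset V)) (hK : IsComplex K)
    (a b : V) (E F : Finset V) (hEF : E ≠ F)
    (hE : IsFacet K E) (hF : IsFacet K F) (haE : a ∈ E) (hbF : b ∈ F)
    (ha : IsFreeVertex K a) (hb : IsFreeVertex K b)
    (hE2 : 2 ≤ E.card) (hF2 : 2 ≤ F.card) :
    (Shellable K → Shellable (addFace K {a, b})) ∧
    (3 ≤ E.card → 3 ≤ F.card → Shellable (addFace K {a, b}) → Shellable K) := by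
  by_cases habK : ({a, b} : Finset V) ∈ K
  · rw [addFace_eq_self_s9 hK habK]
    exact ⟨id, fun _ _ => id⟩
  have hbE : b ∉ E := fun h => hEF (hb.eq_of_isFacet hF hbF hE h)
  have haF : a ∉ F := fun h => hEF (ha.eq_of_isFacet hE haE hF h).symm
  have hfacets (X : Finset V) : IsFacet (addFace K {a, b}) X ↔ IsFacet K X ∨ X = {a, b} :=
    isFacet_addFace_iff hK habK (not_isFacet_subset_pair ha hb hE hF haE hbF hbE haF hE2 hF2)
  have hnew : ¬ IsFacet K {a, b} := fun h => habK h.1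
  refine ⟨fun ⟨l, hl⟩ => ⟨_, hl.append_singleton hfacets hnew fun _ => ?_⟩,
    fun hE3 hF3 ⟨l', hl'⟩ => ?_⟩
  · obtain ⟨-, hfac, -⟩ := hl
    exact isShellingStep_pair (fun Q hQ hsub => habK (hK.2 Q ((hfac Q).2 hQ).1 _ hsub))
      ((hfac E).1 hE) ((hfac F).1 hF) haE hbF
  · obtain ⟨u, w, rfl⟩ := List.append_of_mem ((hl'.2.1 _).1 ((hfacets _).2 (Or.inr rfl)))
    exact ⟨_, hl'.append_of_append_cons hfacets hnew
      (card_pair_inter_add_one_lt ha hb hE hF haE hbF hbE haF hE3 hF3)⟩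

theorem stmt9 {V : Type} [DecidableEq V] (K : Set (Finset V)) (hK : IsComplex K)
    (a b : V) (E F : Finset V) (hab : a ≠ b) (hEF : E ≠ F)
    (hE : IsFacet K E) (hF : IsFacet K F) (haE : a ∈ E) (hbF : b ∈ F)
    (ha : IsFreeVertex K a) (hb : IsFreeVertex K b)
    (hE2 : 2 ≤ E.card) (hF2 : 2 ≤ F.card) :
    (Shellable K → Shellable (addFace K {a, b})) ∧
    (3 ≤ E.card → 3 ≤ F.card → Shellable (addFace K {a, b}) → Shellable K) :=
  stmt9_general K hK a b E F hEF hE hF haE hbF ha hb hE2 hF2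
end

section
/- Let H be a connected simple graph. All nonempty pure skeletons Δ^[i] of the clique complex Δ = Δ(L(H)) with i ≥ 3 are Cohen–Macaulay if and only if H has at most one vertex of degree ≥ 4. -/
open Finset SimpleGraph

variable {V : Type*} [DecidableEq V]

/-!
For `i ≥ 3` every face of `Δ^[i]` contains four pairwise intersecting edges, and these share a
vertex: three pairwise intersecting edges without a common vertex form a triangle, and no fourth
edge meets all three of its sides. Hence `Δ^[i]` is the union of the `i`-skeleta of the simplices
spanned by the edge stars of the vertices of degree `≥ i + 1`.

If only one vertex has degree `≥ 4`, then `Δ^[i]` is a skeleton of a simplex; its links are again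
skeleta of simplices, whose reduced homology vanishes below the top dimension because coning off
the least vertex is a chain contraction. If `v ≠ w` both have degree `≥ 4`, take in `Δ^[3]` the
link of the edge `vz` for a neighbour `z` of `v` of degree `≥ 4`, or of `∅` if there is none. In
that link the edges through `v` are cut off from those through `z` (resp. `w`), so its `H̃₀` is
nonzero although it has dimension at least one.
-/

theorem Sym2.eq_or_eq_of_mem {α : Type*} {a b u : α} {z : Sym2 α} (hab : a ≠ b) (ha : a ∈ z)
    (hb : b ∈ z) (hu : u ∈ z) : u = a ∨ u = b :=
  Sym2.mem_iff.mp ((Sym2.mem_and_mem_iff hab).mp ⟨ha, hb⟩ ▸ hu)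

namespace SimplicialChain

variable (k : Type*) [Field k]

theorem bd_eq_linearCombination (lo : LinearOrder V) :
    bd k lo = Finsupp.linearCombination k (bdFace k lo) := by
  ext1 c
  rw [Finsupp.linearCombination_apply, bd]

theorem bd_single (lo : LinearOrder V) (F : Finset V) (a : k) :
    bd k lo (Finsupp.single F a) = a • bdFace k lo F := by
  rw [bd_eq_linearCombination, Finsupp.linearCombination_single]

theorem bdFace_singleton (lo : LinearOrder V) (x : V) :
    bdFace k lo {x} = Finsupp.single ∅ 1 := by
  let := lo
  rw [bdFace, Finset.sum_singleton, Finset.filter_singleton, if_neg (lt_irrefl x),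
    Finset.card_empty, pow_zero, Finset.erase_singleton, one_smul]

theorem bdFace_pair (lo : LinearOrder V) {x y : V} (hxy : lo.lt x y) :
    bdFace k lo {x, y} = Finsupp.single {y} 1 - Finsupp.single {x} 1 := by
  let := lo
  rw [bdFace, Finset.sum_pair hxy.ne, Finset.erase_insert (by simpa using hxy.ne),
    Finset.erase_insert_of_ne hxy.ne, Finset.erase_singleton, Finset.filter_insert,
    Finset.filter_insert, Finset.filter_singleton, Finset.filter_singleton, if_neg (lt_irrefl x),
    if_neg hxy.not_gt, if_pos hxy, if_neg (lt_irrefl y)]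
  simp [sub_eq_add_neg]

noncomputable def cone (u : V) : (Finset V →₀ k) →ₗ[k] (Finset V →₀ k) :=
  Finsupp.linearCombination k fun F => if u ∈ F then 0 else Finsupp.single (insert u F) 1

theorem cone_single_one (u : V) (F : Finset V) :
    cone k u (Finsupp.single F 1) = if u ∈ F then 0 else Finsupp.single (insert u F) 1 := by
  rw [cone, Finsupp.linearCombination_single, one_smul]

theorem cone_bdFace (lo : LinearOrder V) (u : V) (F : Finset V) :
    cone k u (bdFace k lo F) = let := lo
      ∑ x ∈ F, (-1 : k) ^ (F.filter (· < x)).card •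
        if u ∈ F.erase x then 0 else Finsupp.single (insert u (F.erase x)) 1 := by
  simp only [bdFace, map_sum, map_smul, cone_single_one]

theorem bd_cone_add_cone_bdFace_of_mem (lo : LinearOrder V) {u : V} {F : Finset V}
    (hmin : ∀ w ∈ F, lo.le u w) (huF : u ∈ F) :
    bd k lo (cone k u (Finsupp.single F 1)) + cone k u (bdFace k lo F) = Finsupp.single F 1 := by
  let := lo
  rw [cone_single_one, if_pos huF, bd_eq_linearCombination, map_zero, zero_add, cone_bdFace,
    Finset.sum_eq_single_of_mem u huF, if_neg (Finset.notMem_erase u F),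
    Finset.insert_erase huF, Finset.filter_false_of_mem fun x hx => not_lt.mpr (hmin x hx),
    Finset.card_empty, pow_zero, one_smul]
  intro x _ hxu
  rw [if_pos (Finset.mem_erase.mpr ⟨Ne.symm hxu, huF⟩), smul_zero]

theorem bd_cone_add_cone_bdFace_of_notMem (lo : LinearOrder V) {u : V} {F : Finset V}
    (hmin : ∀ w ∈ F, lo.le u w) (huF : u ∉ F) :
    bd k lo (cone k u (Finsupp.single F 1)) + cone k u (bdFace k lo F) = Finsupp.single F 1 := by
  let := lo
  have hlt : ∀ x ∈ F, u < x := fun x hx =>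
    lt_of_le_of_ne (hmin x hx) (ne_of_mem_of_not_mem hx huF).symm
  rw [cone_single_one, if_neg huF, bd_single, one_smul, cone_bdFace, bdFace, Finset.sum_insert huF,
    Finset.erase_insert huF, Finset.filter_false_of_mem (fun x hx => ?_), Finset.card_empty,
    pow_zero, one_smul, add_assoc, ← Finset.sum_add_distrib, Finset.sum_eq_zero, add_zero]
  · intro x hx
    have hux : u ≠ x := (hlt x hx).ne
    rw [if_neg (fun h => huF (Finset.mem_of_mem_erase h)), Finset.erase_insert_of_ne hux,
      Finset.filter_insert, if_pos (hlt x hx),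
      Finset.card_insert_of_notMem (fun h => huF (Finset.mem_filter.mp h).1), pow_succ,
      mul_neg_one, neg_smul, neg_add_cancel]
  · rcases Finset.mem_insert.mp hx with rfl | hx
    · exact lt_irrefl x
    · exact not_lt.mpr (hmin x hx)

theorem bd_cone_add_cone_bd (lo : LinearOrder V) {u : V} {c : Finset V →₀ k}
    (hmin : ∀ F ∈ c.support, ∀ w ∈ F, lo.le u w) :
    bd k lo (cone k u c) + cone k u (bd k lo c) = c := by
  set B := Finsupp.linearCombination k (bdFace k lo)
  set T := B ∘ₗ cone k u + cone k u ∘ₗ B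
  have hT : ∀ F ∈ c.support, T (Finsupp.single F 1) = Finsupp.single F 1 := by
    intro F hF
    simp only [T, LinearMap.add_apply, LinearMap.comp_apply, B, Finsupp.linearCombination_single,
      one_smul, ← bd_eq_linearCombination]
    by_cases huF : u ∈ F
    · exact bd_cone_add_cone_bdFace_of_mem k lo (hmin F hF) huF
    · exact bd_cone_add_cone_bdFace_of_notMem k lo (hmin F hF) huF
  change T c = c
  conv_lhs => rw [← c.sum_single]
  conv_rhs => rw [← c.sum_single]
  rw [map_finsuppSum]
  refine Finsupp.sum_congr fun F hF => ?_
  rw [← Finsupp.smul_single_one, map_smul, hT F hF]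

theorem exists_of_mem_support_cone {u : V} {c : Finset V →₀ k} {G : Finset V}
    (hG : G ∈ (cone k u c).support) : ∃ F ∈ c.support, u ∉ F ∧ insert u F = G := by
  rw [cone, Finsupp.linearCombination_apply] at hG
  obtain ⟨F, hF, hGF⟩ := Finset.mem_biUnion.mp (Finsupp.support_sum hG)
  by_cases huF : u ∈ F
  · simp [huF] at hGF
  · rw [if_neg huF, Finsupp.smul_single_one] at hGF
    exact ⟨F, hF, huF, (Finset.mem_singleton.mp (Finsupp.support_single_subset hGF)).symm⟩

end SimplicialChain

def simplexSkeleton (S : Finset V) (n : ℕ) : Set (Finset V) := {G | G ⊆ S ∧ G.card ≤ n}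

open SimplicialChain in
theorem homologyVanishes_simplexSkeleton (k : Type*) [Field k] {S : Finset V} {n j : ℕ}
    (h : ∃ G ∈ simplexSkeleton S n, j < G.card) :
    HomologyVanishes k (simplexSkeleton S n) j := by
  obtain ⟨G₀, ⟨hG₀S, hG₀n⟩, hjG₀⟩ := h
  intro lo c hc hbd
  let := lo
  have hS : S.Nonempty := (Finset.card_pos.mp (by omega)).mono hG₀S
  have hmin : ∀ F ∈ c.support, ∀ w ∈ F, S.min' hS ≤ w :=
    fun F hF w hw => S.min'_le w ((hc F hF).1.1 hw)
  refine ⟨cone k (S.min' hS) c, fun G hG => ?_, ?_⟩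
  · obtain ⟨F, hF, huF, rfl⟩ := exists_of_mem_support_cone k hG
    obtain ⟨⟨hFS, -⟩, hFj⟩ := hc F hF
    have hcard : (insert (S.min' hS) F).card = j + 1 := by
      rw [Finset.card_insert_of_notMem huF, hFj]
    exact ⟨⟨Finset.insert_subset (S.min'_mem hS) hFS, by omega⟩, hcard⟩
  · simpa [hbd] using bd_cone_add_cone_bd k lo hmin

theorem linkFace_simplexSkeleton {S F : Finset V} {n : ℕ} (hF : F ∈ simplexSkeleton S n) :
    linkFace (simplexSkeleton S n) F = simplexSkeleton (S \ F) (n - F.card) := by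
  ext G
  simp only [linkFace, simplexSkeleton, Set.mem_ofPred_eq, Finset.union_subset_iff,
    Finset.subset_sdiff]
  constructor
  · rintro ⟨hdis, ⟨-, hGS⟩, hcard⟩
    rw [Finset.card_union_of_disjoint hdis] at hcard
    exact ⟨⟨hGS, hdis.symm⟩, by omega⟩
  · rintro ⟨⟨hGS, hdis⟩, hcard⟩
    rw [Finset.card_union_of_disjoint hdis.symm]
    exact ⟨hdis.symm, ⟨hF.1, hGS⟩, by have := hF.2; omega⟩

theorem isCMover_simplexSkeleton (k : Type*) [Field k] (S : Finset V) (n : ℕ) :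
    IsCMover k (simplexSkeleton S n) := fun F hF j hj => by
  rw [linkFace_simplexSkeleton hF] at hj ⊢
  exact homologyVanishes_simplexSkeleton k hj

open SimplicialChain in
theorem not_homologyVanishes_one_of_separated (k : Type*) [Field k] {K : Set (Finset V)}
    (P : V → Prop) {x y : V} (hx : {x} ∈ K) (hy : {y} ∈ K) (hPx : P x) (hPy : ¬ P y)
    (hsep : ∀ a b, a ≠ b → {a, b} ∈ K → (P a ↔ P b)) : ¬ HomologyVanishes k K 1 := by
  classical
  intro hK
  let lo : LinearOrder V := IsWellOrder.linearOrder WellOrderingRel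
  set c := Finsupp.single ({x} : Finset V) (1 : k) - Finsupp.single {y} 1
  have hc : ∀ F ∈ c.support, F ∈ K ∧ F.card = 1 := by
    intro F hF
    rcases Finset.mem_union.mp (Finsupp.support_sub hF) with hF | hF <;>
      obtain rfl := Finset.mem_singleton.mp (Finsupp.support_single_subset hF)
    exacts [⟨hx, Finset.card_singleton x⟩, ⟨hy, Finset.card_singleton y⟩]
  have hbd : bd k lo c = 0 := by
    rw [bd_eq_linearCombination, map_sub, Finsupp.linearCombination_single,
      Finsupp.linearCombination_single, bdFace_singleton, bdFace_singleton, sub_self]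
  obtain ⟨d, hd, hdc⟩ := hK lo c hc hbd
  -- `ε` counts the coefficients of the vertices satisfying `P`; it kills the boundary of every
  -- edge of `K` but not `c`.
  let ε := Finsupp.linearCombination k fun F : Finset V => if ∃ a ∈ F, P a then (1 : k) else 0
  have hεc : ε c = 1 := by simp [ε, c, hPx, hPy]
  have hεpair : ∀ a b, lo.lt a b → (P a ↔ P b) → ε (bdFace k lo {a, b}) = 0 := by
    intro a b hab hP
    simp [bdFace_pair k lo hab, ε, hP]
  have hεbd : ε (bd k lo d) = 0 := by
    rw [bd, map_finsuppSum]
    refine Finset.sum_eq_zero fun G hG => ?_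
    dsimp only
    obtain ⟨hGK, hG2⟩ := hd G hG
    obtain ⟨a, b, hab, rfl⟩ := Finset.card_eq_two.mp hG2
    rw [map_smul ε]
    rcases lt_or_gt_of_ne hab with h | h
    · rw [hεpair a b h (hsep a b hab hGK), smul_zero]
    · rw [Finset.pair_comm, hεpair b a h (hsep a b hab hGK).symm, smul_zero]
  rw [hdc, hεc] at hεbd
  exact one_ne_zero hεbd

namespace SimpleGraph

section EdgeStar

variable [Fintype V] (H : SimpleGraph V) [DecidableRel H.Adj]

def edgeStar (v : V) : Finset H.edgeSet := {e | v ∈ (e : Sym2 V)}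

variable {H}

@[simp]
theorem mem_edgeStar {v : V} {e : H.edgeSet} : e ∈ H.edgeStar v ↔ v ∈ (e : Sym2 V) := by
  simp [edgeStar]

variable (H)

theorem card_edgeStar (v : V) : (H.edgeStar v).card = H.degree v := by
  rw [← H.card_incidenceFinset_eq_degree v]
  refine Finset.card_bij (fun e _ => (e : Sym2 V)) (fun e he => ?_) (fun e _ f _ => Subtype.ext)
    (fun e he => ?_)
  · exact (H.mem_incidenceFinset v _).mpr ⟨e.2, mem_edgeStar.mp he⟩
  · obtain ⟨he, hve⟩ := (H.mem_incidenceFinset v e).mp he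
    exact ⟨⟨e, he⟩, mem_edgeStar.mpr hve, rfl⟩

theorem isClique_lineGraph_of_subset_edgeStar {v : V} {s : Finset H.edgeSet}
    (hs : s ⊆ H.edgeStar v) : H.lineGraph.IsClique (s : Set H.edgeSet) :=
  fun _ he _ hf hef =>
    lineGraph_adj_iff_exists.mpr ⟨hef, v, mem_edgeStar.mp (hs he), mem_edgeStar.mp (hs hf)⟩

theorem exists_subset_edgeStar_of_isClique_lineGraph {s : Finset H.edgeSet}
    (hs : H.lineGraph.IsClique (s : Set H.edgeSet)) (hcard : 4 ≤ s.card) :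
    ∃ v, s ⊆ H.edgeStar v := by
  have meet : ∀ e ∈ s, ∀ f ∈ s, ∃ u ∈ (e : Sym2 V), u ∈ (f : Sym2 V) := by
    intro e he f hf
    obtain rfl | hef := eq_or_ne e f
    · exact ⟨_, Sym2.out_fst_mem _, Sym2.out_fst_mem _⟩
    · exact (lineGraph_adj_iff_exists.mp (hs he hf hef)).2
  have edge_eq {e f : H.edgeSet} {a b : V} (hab : a ≠ b) (hae : a ∈ (e : Sym2 V))
      (hbe : b ∈ (e : Sym2 V)) (haf : a ∈ (f : Sym2 V)) (hbf : b ∈ (f : Sym2 V)) : e = f :=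
    Subtype.ext (Sym2.eq_of_ne_mem hab hae hbe haf hbf)
  obtain ⟨e, he⟩ := Finset.card_pos.mp (by omega : 0 < s.card)
  have hae := Sym2.out_fst_mem (e : Sym2 V)
  set a := (e : Sym2 V).out.1
  have hbe := Sym2.other_mem hae
  have hab : a ≠ Sym2.Mem.other hae := (Sym2.other_ne (H.not_isDiag_of_mem_edgeSet e.2) hae).symm
  set b := Sym2.Mem.other hae
  by_contra! hnot
  obtain ⟨f, hf, haf⟩ := Finset.not_subset.mp (hnot a)
  obtain ⟨g, hg, hbg⟩ := Finset.not_subset.mp (hnot b)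
  rw [mem_edgeStar] at haf hbg
  have hbf : b ∈ (f : Sym2 V) := by
    obtain ⟨u, hue, huf⟩ := meet e he f hf
    rcases Sym2.eq_or_eq_of_mem hab hae hbe hue with rfl | rfl
    exacts [absurd huf haf, huf]
  have hag : a ∈ (g : Sym2 V) := by
    obtain ⟨u, hue, hug⟩ := meet e he g hg
    rcases Sym2.eq_or_eq_of_mem hab hae hbe hue with rfl | rfl
    exacts [hug, absurd hug hbg]
  obtain ⟨c, hcf, hcg⟩ := meet f hf g hg
  have hac : a ≠ c := ne_of_mem_of_not_mem hcf haf |>.symm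
  have hbc : b ≠ c := ne_of_mem_of_not_mem hcg hbg |>.symm
  -- `e`, `f`, `g` form the triangle `abc`, and an edge meeting all three sides is one of them.
  have hsub : s ⊆ {e, f, g} := by
    intro h hh
    simp only [Finset.mem_insert, Finset.mem_singleton]
    obtain ⟨u, hue, huh⟩ := meet e he h hh
    rcases Sym2.eq_or_eq_of_mem hab hae hbe hue with rfl | rfl
    · obtain ⟨w, hwf, hwh⟩ := meet f hf h hh
      rcases Sym2.eq_or_eq_of_mem hbc hbf hcf hwf with rfl | rfl
      · exact Or.inl (edge_eq hab huh hwh hae hbe)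
      · exact Or.inr (Or.inr (edge_eq hac huh hwh hag hcg))
    · obtain ⟨w, hwg, hwh⟩ := meet g hg h hh
      rcases Sym2.eq_or_eq_of_mem hac hag hcg hwg with rfl | rfl
      · exact Or.inl (edge_eq hab hwh huh hae hbe)
      · exact Or.inr (Or.inl (edge_eq hbc huh hwh hbf hcf))
  have := (Finset.card_le_card hsub).trans Finset.card_le_three
  omega

theorem mem_pureSkeleton_lineGraph_iff {i : ℕ} (hi : 3 ≤ i) {G : Finset H.edgeSet} :
    G ∈ pureSkeleton (cliqueComplex H.lineGraph) i ↔
      ∃ v, i + 1 ≤ H.degree v ∧ G ⊆ H.edgeStar v ∧ G.card ≤ i + 1 := by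
  constructor
  · rintro ⟨F, hF, hFcard, hGF⟩
    obtain ⟨v, hv⟩ := H.exists_subset_edgeStar_of_isClique_lineGraph hF (by omega)
    refine ⟨v, ?_, hGF.trans hv, hFcard ▸ Finset.card_le_card hGF⟩
    rw [← card_edgeStar, ← hFcard]
    exact Finset.card_le_card hv
  · rintro ⟨v, hv, hG, hGcard⟩
    obtain ⟨F, hGF, hF, hFcard⟩ :=
      Finset.exists_subsuperset_card_eq hG hGcard (by rwa [card_edgeStar])
    exact ⟨F, H.isClique_lineGraph_of_subset_edgeStar hF, hFcard, hGF⟩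

end EdgeStar

section LineGraphSkeleton

variable [Fintype V] (H : SimpleGraph V) [DecidableRel H.Adj] (k : Type*) [Field k]

-- In the link of `F₀` in `Δ^[3]`, `hsep` makes the edges through `v` a union of connected
-- components, and an edge through `w` lies outside them.
theorem not_isCMover_pureSkeleton_three_of_separating {v w : V} {F₀ : Finset H.edgeSet}
    (hv : 4 ≤ H.degree v) (hw : 4 ≤ H.degree w) (hwv : w ≠ v) (hF₀v : F₀ ⊆ H.edgeStar v)
    (hF₀w : F₀ ⊆ H.edgeStar w) (hF₀ : F₀.card ≤ 2)
    (hsep : ∀ z ≠ v, 4 ≤ H.degree z → F₀ ⊆ H.edgeStar z →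
      ∀ e ∈ H.edgeStar z, v ∈ (e : Sym2 V) → e ∈ F₀) :
    ¬ IsCMover k (pureSkeleton (cliqueComplex H.lineGraph) 3) := by
  set K := pureSkeleton (cliqueComplex H.lineGraph) 3
  have mem_link {G : Finset H.edgeSet} : G ∈ linkFace K F₀ ↔
      Disjoint F₀ G ∧
        ∃ z, 4 ≤ H.degree z ∧ F₀ ∪ G ⊆ H.edgeStar z ∧ (F₀ ∪ G).card ≤ 4 :=
    and_congr_right fun _ => H.mem_pureSkeleton_lineGraph_iff le_rfl
  have mem_link_of_sdiff {z : V} (hz : 4 ≤ H.degree z) (hF₀z : F₀ ⊆ H.edgeStar z)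
      {G : Finset H.edgeSet} (hG : G ⊆ H.edgeStar z \ F₀) (hGcard : G.card ≤ 2) :
      G ∈ linkFace K F₀ := by
    have hdis : Disjoint F₀ G := Finset.disjoint_of_subset_right hG Finset.disjoint_sdiff
    refine mem_link.mpr
      ⟨hdis, z, hz, Finset.union_subset hF₀z (hG.trans Finset.sdiff_subset), ?_⟩
    rw [Finset.card_union_of_disjoint hdis]
    omega
  have hF₀K : F₀ ∈ K :=
    (H.mem_pureSkeleton_lineGraph_iff le_rfl).mpr ⟨v, hv, hF₀v, by omega⟩
  have hcard_v : 2 ≤ (H.edgeStar v \ F₀).card := by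
    rw [Finset.card_sdiff_of_subset hF₀v, card_edgeStar]
    omega
  obtain ⟨t, ht, htcard⟩ := Finset.exists_subset_card_eq hcard_v
  obtain ⟨x, hx⟩ := Finset.card_pos.mp (by omega : 0 < t.card)
  obtain ⟨y, hy⟩ : (H.edgeStar w \ F₀).Nonempty := by
    rw [← Finset.card_pos, Finset.card_sdiff_of_subset hF₀w, card_edgeStar]
    omega
  obtain ⟨hyw, hyF₀⟩ := Finset.mem_sdiff.mp hy
  intro hCM
  refine not_homologyVanishes_one_of_separated k (fun e : H.edgeSet => v ∈ (e : Sym2 V))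
    (mem_link_of_sdiff hv hF₀v (Finset.singleton_subset_iff.mpr (ht hx)) (by simp))
    (mem_link_of_sdiff hw hF₀w (Finset.singleton_subset_iff.mpr hy) (by simp))
    (mem_edgeStar.mp (Finset.mem_sdiff.mp (ht hx)).1)
    (fun hvy => hyF₀ (hsep w hwv hw hF₀w y hyw hvy)) (fun a b _ hab => ?_)
    (hCM F₀ hF₀K 1 ⟨t, mem_link_of_sdiff hv hF₀v ht htcard.le, by omega⟩)
  obtain ⟨hdis, z, hz, hsub, -⟩ := mem_link.mp hab
  obtain ⟨hF₀z, habz⟩ := Finset.union_subset_iff.mp hsub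
  obtain rfl | hzv := eq_or_ne z v
  · exact iff_of_true (mem_edgeStar.mp (habz (by simp))) (mem_edgeStar.mp (habz (by simp)))
  · have hnot : ∀ e ∈ ({a, b} : Finset H.edgeSet), v ∉ (e : Sym2 V) := fun e he hve =>
      Finset.disjoint_left.mp hdis (hsep z hzv hz hF₀z e (habz he) hve) he
    exact iff_of_false (hnot a (by simp)) (hnot b (by simp))

theorem not_isCMover_pureSkeleton_three {v w : V} (hv : 4 ≤ H.degree v) (hw : 4 ≤ H.degree w)
    (hvw : v ≠ w) : ¬ IsCMover k (pureSkeleton (cliqueComplex H.lineGraph) 3) := by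
  by_cases hadj : ∃ z, 4 ≤ H.degree z ∧ H.Adj v z
  · obtain ⟨z, hz, hvz⟩ := hadj
    let e₀ : H.edgeSet := ⟨s(v, z), hvz⟩
    have he₀ : ∀ u, e₀ ∈ H.edgeStar u ↔ u = v ∨ u = z := fun u => by simp [e₀]
    refine H.not_isCMover_pureSkeleton_three_of_separating k (F₀ := {e₀}) hv hz hvz.ne'
      (by simp [he₀]) (by simp [he₀]) (by simp) fun u huv _ hu e he hve => ?_
    obtain rfl : u = z := ((he₀ u).mp (Finset.singleton_subset_iff.mp hu)).resolve_left huv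
    exact Finset.mem_singleton.mpr <| Subtype.ext <| Sym2.eq_of_ne_mem hvz.ne hve
      (mem_edgeStar.mp he) (Sym2.mem_mk_left _ _) (Sym2.mem_mk_right _ _)
  · simp only [not_exists, not_and] at hadj
    refine H.not_isCMover_pureSkeleton_three_of_separating k (F₀ := ∅) hv hw hvw.symm
      (Finset.empty_subset _) (Finset.empty_subset _) (by simp) fun z hzv hz _ e he hve => ?_
    exact (hadj z hz <|
      H.adj_of_mem_incidenceSet hzv.symm ⟨e.2, hve⟩ ⟨e.2, mem_edgeStar.mp he⟩).elim

theorem pureSkeleton_lineGraph_eq_simplexSkeleton {i : ℕ} (hi : 3 ≤ i) {v : V}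
    (hv : i + 1 ≤ H.degree v) (huniq : ∀ w, 4 ≤ H.degree w → w = v) :
    pureSkeleton (cliqueComplex H.lineGraph) i = simplexSkeleton (H.edgeStar v) (i + 1) := by
  ext G
  rw [H.mem_pureSkeleton_lineGraph_iff hi]
  constructor
  · rintro ⟨z, hz, hG, hGcard⟩
    obtain rfl := huniq z (by omega)
    exact ⟨hG, hGcard⟩
  · rintro ⟨hG, hGcard⟩
    exact ⟨v, hv, hG, hGcard⟩

end LineGraphSkeleton

end SimpleGraph

theorem stmt14_general {V : Type} [DecidableEq V] [Fintype V] (H : SimpleGraph V)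
    [DecidableRel H.Adj] :
    (∀ i : ℕ, 3 ≤ i → (∃ F ∈ cliqueComplex (SimpleGraph.lineGraph H), F.card = i + 1) →
      ∀ (k : Type) [Field k],
        IsCMover k (pureSkeleton (cliqueComplex (SimpleGraph.lineGraph H)) i)) ↔
    (∀ v w : V, 4 ≤ H.degree v → 4 ≤ H.degree w → v = w) := by
  constructor
  · intro hCM v w hv hw
    by_contra hvw
    obtain ⟨F, hF, hFcard⟩ :=
      Finset.exists_subset_card_eq (show 4 ≤ (H.edgeStar v).card by rwa [H.card_edgeStar])
    exact H.not_isCMover_pureSkeleton_three ℚ hv hw hvw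
      (hCM 3 le_rfl ⟨F, H.isClique_lineGraph_of_subset_edgeStar hF, hFcard⟩ ℚ)
  · rintro huniq i hi ⟨F, hF, hFcard⟩ k _
    obtain ⟨v, hv, -⟩ :=
      (H.mem_pureSkeleton_lineGraph_iff hi).mp ⟨F, hF, hFcard, subset_rfl⟩
    rw [H.pureSkeleton_lineGraph_eq_simplexSkeleton hi hv fun w hw => huniq w v hw (by omega)]
    exact isCMover_simplexSkeleton k _ _

theorem stmt14 {V : Type} [DecidableEq V] [Fintype V] (H : SimpleGraph V)
    [DecidableRel H.Adj] (hconn : H.Connected) :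
    (∀ i : ℕ, 3 ≤ i → (∃ F ∈ cliqueComplex (SimpleGraph.lineGraph H), F.card = i + 1) →
      ∀ (k : Type) [Field k],
        IsCMover k (pureSkeleton (cliqueComplex (SimpleGraph.lineGraph H)) i)) ↔
    (∀ v w : V, 4 ≤ H.degree v → 4 ≤ H.degree w → v = w) :=
  stmt14_general H
end

section
/- Let H be a connected simple graph with two distinct vertices v_1, v_2 each of degree ≥ 4, and let Δ = Δ(L(H)). Then Δ^[4] is not strongly connected: a 4-star of H at v_1 and a 4-star at v_2 are facets of Δ^[4] that cannot be joined by a sequence of facets in which consecutive facets share 4 elements. -/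
open Finset SimpleGraph

variable {V : Type*} [DecidableEq V]

/-! Four pairwise intersecting edges of a simple graph share a common vertex, since the only
other way for edges to pairwise intersect is to form a triangle, which has just three edges. So
every facet of `Δ^[4]` is a star of four edges at a single vertex. Two facets that share three
edges are stars at the same vertex, because two distinct vertices lie on at most one common
edge; hence the centre of the star is constant along every chain of adjacent facets. -/

theorem Sym2.eq_or_eq_or_eq_of_meets_triangle {α : Type*} {a b c : α} {z : Sym2 α}
    (hab : a ≠ b) (hbc : b ≠ c) (hac : a ≠ c)
    (h₁ : ∃ x ∈ z, x ∈ s(a, b)) (h₂ : ∃ x ∈ z, x ∈ s(b, c)) (h₃ : ∃ x ∈ z, x ∈ s(a, c)) :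
    z = s(a, b) ∨ z = s(b, c) ∨ z = s(a, c) := by
  induction z using Sym2.ind with
  | h x y =>
    simp only [Sym2.mem_iff, exists_eq_or_imp, exists_eq_left, Sym2.eq_iff] at h₁ h₂ h₃ ⊢
    grind

theorem isFacet_pureSkeleton_iff {α : Type*} [DecidableEq α] {K : Set (Finset α)} {i : ℕ}
    {F : Finset α} : IsFacet (pureSkeleton K i) F ↔ F ∈ K ∧ F.card = i + 1 := by
  constructor
  · rintro ⟨⟨F', hF'K, hF'card, hFF'⟩, hmax⟩
    obtain rfl : F = F' := hmax F' ⟨F', hF'K, hF'card, subset_rfl⟩ hFF'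
    exact ⟨hF'K, hF'card⟩
  · rintro ⟨hFK, hFcard⟩
    refine ⟨⟨F, hFK, hFcard, subset_rfl⟩, fun G ⟨G', _, hG'card, hGG'⟩ hFG => ?_⟩
    exact eq_of_subset_of_card_le hFG (hFcard ▸ hG'card ▸ card_le_card hGG')

namespace SimpleGraph

variable {α : Type*} {H : SimpleGraph α}

theorem isClique_lineGraph_of_forall_mem {S : Set H.edgeSet} {v : α}
    (h : ∀ e ∈ S, v ∈ (e : Sym2 α)) : H.lineGraph.IsClique S :=
  fun e he f hf hne => lineGraph_adj_iff_exists.2 ⟨hne, v, h e he, h f hf⟩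

theorem card_le_one_of_forall_mem_mem {T : Finset H.edgeSet} {v w : α} (hvw : v ≠ w)
    (h : ∀ e ∈ T, v ∈ (e : Sym2 α) ∧ w ∈ (e : Sym2 α)) : T.card ≤ 1 :=
  card_le_one.2 fun e he f hf =>
    Subtype.ext (Sym2.eq_of_ne_mem hvw (h e he).1 (h e he).2 (h f hf).1 (h f hf).2)

theorem IsClique.exists_mem_mem_of_lineGraph {S : Set H.edgeSet} (hS : H.lineGraph.IsClique S)
    {e f : H.edgeSet} (he : e ∈ S) (hf : f ∈ S) : ∃ x ∈ (e : Sym2 α), x ∈ (f : Sym2 α) := by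
  by_cases hef : e = f
  · subst hef
    exact (e : Sym2 α).ind fun x _ => ⟨x, Sym2.mem_mk_left _ _, Sym2.mem_mk_left _ _⟩
  · exact (lineGraph_adj_iff_exists.1 (hS he hf hef)).2

theorem exists_forall_mem_of_isClique_lineGraph {S : Finset H.edgeSet}
    (hS : H.lineGraph.IsClique (S : Set H.edgeSet)) (hcard : 3 < S.card) :
    ∃ v, ∀ e ∈ S, v ∈ (e : Sym2 α) := by
  classical
  have meet : ∀ e ∈ S, ∀ f ∈ S, ∃ x ∈ (e : Sym2 α), x ∈ (f : Sym2 α) :=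
    fun e he f hf => hS.exists_mem_mem_of_lineGraph (mem_coe.2 he) (mem_coe.2 hf)
  obtain ⟨e₁, he₁⟩ : S.Nonempty := card_pos.1 (by omega)
  obtain ⟨⟨a, b⟩, he₁ab⟩ := Quot.exists_rep (e₁ : Sym2 α)
  change s(a, b) = _ at he₁ab
  have hab : a ≠ b := by
    simpa [← he₁ab] using H.not_isDiag_of_mem_edgeSet e₁.2
  by_contra! hnot
  obtain ⟨e₂, he₂, ha₂⟩ := hnot a
  obtain ⟨e₃, he₃, hb₃⟩ := hnot b
  have hb₂ : b ∈ (e₂ : Sym2 α) := by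
    obtain ⟨x, hx₂, hx₁⟩ := meet e₂ he₂ e₁ he₁
    rw [← he₁ab, Sym2.mem_iff] at hx₁
    grind
  have ha₃ : a ∈ (e₃ : Sym2 α) := by
    obtain ⟨x, hx₃, hx₁⟩ := meet e₃ he₃ e₁ he₁
    rw [← he₁ab, Sym2.mem_iff] at hx₁
    grind
  obtain ⟨c, hc₂, hc₃⟩ := meet e₂ he₂ e₃ he₃
  have hbc : b ≠ c := by rintro rfl; exact hb₃ hc₃
  have hac : a ≠ c := by rintro rfl; exact ha₂ hc₂
  have he₂bc : (e₂ : Sym2 α) = s(b, c) := (Sym2.mem_and_mem_iff hbc).1 ⟨hb₂, hc₂⟩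
  have he₃ac : (e₃ : Sym2 α) = s(a, c) := (Sym2.mem_and_mem_iff hac).1 ⟨ha₃, hc₃⟩
  have hsub : S.map (Function.Embedding.subtype _) ⊆ {s(a, b), s(b, c), s(a, c)} := by
    intro z hz
    obtain ⟨e, he, rfl⟩ := mem_map.1 hz
    have := Sym2.eq_or_eq_or_eq_of_meets_triangle hab hbc hac
      (he₁ab ▸ meet e he e₁ he₁) (he₂bc ▸ meet e he e₂ he₂) (he₃ac ▸ meet e he e₃ he₃)
    simpa using this
  have := (card_le_card hsub).trans card_le_three
  simp only [card_map] at this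
  omega

variable [DecidableEq α] {i : ℕ}

theorem forall_mem_of_facetAdj (hi : 3 ≤ i) {v : α} {F G : Finset H.edgeSet}
    (hFv : ∀ e ∈ F, v ∈ (e : Sym2 α))
    (hFG : FacetAdj (pureSkeleton (cliqueComplex H.lineGraph) i) F G) :
    ∀ e ∈ G, v ∈ (e : Sym2 α) := by
  obtain ⟨hF, hG, hFGcard, -⟩ := hFG
  obtain ⟨-, hFcard⟩ := isFacet_pureSkeleton_iff.1 hF
  obtain ⟨hGcl, hGcard⟩ := isFacet_pureSkeleton_iff.1 hG
  obtain ⟨w, hGw⟩ := exists_forall_mem_of_isClique_lineGraph hGcl (by omega)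
  obtain rfl : v = w := by
    by_contra hvw
    have := card_le_one_of_forall_mem_mem hvw fun e he =>
      ⟨hFv e (mem_inter.1 he).1, hGw e (mem_inter.1 he).2⟩
    omega
  exact hGw

theorem forall_mem_of_reflTransGen_facetAdj (hi : 3 ≤ i) {v : α} {F G : Finset H.edgeSet}
    (hFv : ∀ e ∈ F, v ∈ (e : Sym2 α))
    (hFG : Relation.ReflTransGen (FacetAdj (pureSkeleton (cliqueComplex H.lineGraph) i)) F G) :
    ∀ e ∈ G, v ∈ (e : Sym2 α) := by
  induction hFG with
  | refl => exact hFv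
  | tail _ hadj ih => exact forall_mem_of_facetAdj hi ih hadj

end SimpleGraph

theorem stmt15_general {V : Type} [DecidableEq V] (H : SimpleGraph V)
    (v₁ v₂ : V) (hne : v₁ ≠ v₂)
    (E F : Finset H.edgeSet) (hEcard : E.card = 4) (hFcard : F.card = 4)
    (hEv : ∀ e ∈ E, v₁ ∈ (e : Sym2 V)) (hFv : ∀ e ∈ F, v₂ ∈ (e : Sym2 V)) :
    IsFacet (pureSkeleton (cliqueComplex (SimpleGraph.lineGraph H)) 3) E ∧
    IsFacet (pureSkeleton (cliqueComplex (SimpleGraph.lineGraph H)) 3) F ∧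
    ¬ Relation.ReflTransGen
        (FacetAdj (pureSkeleton (cliqueComplex (SimpleGraph.lineGraph H)) 3)) E F ∧
    ¬ StronglyConnected (pureSkeleton (cliqueComplex (SimpleGraph.lineGraph H)) 3) := by
  have hE : IsFacet (pureSkeleton (cliqueComplex H.lineGraph) 3) E :=
    isFacet_pureSkeleton_iff.2 ⟨isClique_lineGraph_of_forall_mem hEv, hEcard⟩
  have hF : IsFacet (pureSkeleton (cliqueComplex H.lineGraph) 3) F :=
    isFacet_pureSkeleton_iff.2 ⟨isClique_lineGraph_of_forall_mem hFv, hFcard⟩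
  have hEF : ¬ Relation.ReflTransGen
      (FacetAdj (pureSkeleton (cliqueComplex (SimpleGraph.lineGraph H)) 3)) E F := by
    intro h
    have hFv₁ := forall_mem_of_reflTransGen_facetAdj le_rfl hEv h
    have := card_le_one_of_forall_mem_mem hne fun e he => ⟨hFv₁ e he, hFv e he⟩
    omega
  exact ⟨hE, hF, hEF, fun hsc => hEF (hsc.2 E F hE hF)⟩

/-- Here the pure skeleton of the clique complex generated by the
faces of cardinality `4` (the `4`-stars have `4` elements) is used. -/
theorem stmt15 {V : Type} [DecidableEq V] [Fintype V] (H : SimpleGraph V)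
    [DecidableRel H.Adj] (hconn : H.Connected) (v₁ v₂ : V) (hne : v₁ ≠ v₂)
    (hd1 : 4 ≤ H.degree v₁) (hd2 : 4 ≤ H.degree v₂)
    (E F : Finset H.edgeSet) (hEcard : E.card = 4) (hFcard : F.card = 4)
    (hEv : ∀ e ∈ E, v₁ ∈ (e : Sym2 V)) (hFv : ∀ e ∈ F, v₂ ∈ (e : Sym2 V)) :
    IsFacet (pureSkeleton (cliqueComplex (SimpleGraph.lineGraph H)) 3) E ∧
    IsFacet (pureSkeleton (cliqueComplex (SimpleGraph.lineGraph H)) 3) F ∧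
    ¬ Relation.ReflTransGen
        (FacetAdj (pureSkeleton (cliqueComplex (SimpleGraph.lineGraph H)) 3)) E F ∧
    ¬ StronglyConnected (pureSkeleton (cliqueComplex (SimpleGraph.lineGraph H)) 3) :=
  stmt15_general H v₁ v₂ hne E F hEcard hFcard hEv hFv
end
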